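/- arXiv:1501.05082 — 4 statements merged into one kernel-verified Lean document; each statement's English description precedes it below -/
import Mathlib

section
/- Let $\Gamma$ be a group and $\Lambda \leq \Gamma$ a subgroup. If there exists a finite subset $B \subseteq \Gamma$ with $B\Lambda B = \Gamma$, then $\Lambda$ has finite index in $\Gamma$. -/
open scoped Pointwise

/-- If `Λ` is a subgroup of a group `Γ` and there is a finite subset `B ⊆ Γ` with
`B Λ B = Γ`, then `Λ` has finite index in `Γ`. -/
theorem stmt_2 {Γ : Type*} [Group Γ] (Λ : Subgroup Γ) (B : Finset Γ)
    (h : ∀ g : Γ, ∃ b₁ ∈ B, ∃ b₂ ∈ B, ∃ l ∈ Λ, g = b₁ * l * b₂) :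
    Λ.FiniteIndex := by
  classical
  set H : Γ × Γ → Subgroup Γ := fun p => Λ.comap (MulAut.conj p.2).toMonoidHom with hH
  set g : Γ × Γ → Γ := fun p => p.1 * p.2 with hg
  have hcovers : ⋃ i ∈ B ×ˢ B, (g i) • ((H i : Set Γ)) = Set.univ := by
    ext x
    simp only [Set.mem_iUnion, Set.mem_univ, iff_true]
    obtain ⟨b₁, hb₁, b₂, hb₂, l, hl, rfl⟩ := h x
    refine ⟨(b₁, b₂), Finset.mem_product.mpr ⟨hb₁, hb₂⟩, ?_⟩
    refine ⟨b₂⁻¹ * l * b₂, ?_, by simp [hg, smul_eq_mul]; group⟩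
    simp only [hH, SetLike.mem_coe, Subgroup.mem_comap, MulEquiv.coe_toMonoidHom,
      MulAut.conj_apply]
    convert hl using 1
    group
  obtain ⟨i, _, hi⟩ := Subgroup.exists_finiteIndex_of_leftCoset_cover hcovers
  have : (H i).index = Λ.index := by
    rw [hH, Subgroup.index_comap,
      MonoidHom.range_eq_top.mpr (MulAut.conj i.2).surjective, Subgroup.relIndex_top_right]
  exact ⟨this ▸ hi.index_ne_zero⟩
end

section
/- Let $\Gamma$ be a finitely generated group with word metric, with balls $B_n = \{g : |g| \leq n\}$ and exponential growth rate $v = \liminf_n \frac{\log |B_n|}{n}$. Let $\mu$ be a finitely supported probability measure on $\Gamma$ with asymptotic entropy $h = \lim_n H(\mu^{*n})/n$ and drift $\ell = \lim_n L(\mu^{*n})/n$. Then $h \leq \ell v$ (the fundamental inequality of Guivarc'h). -/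
open Filter

/-- The word length of `g` with respect to a set `S` of generators. -/
noncomputable def wordLength {G : Type*} [Group G] (S : Set G) (g : G) : ℕ :=
  sInf {n | ∃ l : List G, (∀ x ∈ l, x ∈ S) ∧ l.length = n ∧ l.prod = g}

/-- Convolution of two measures on a group. -/
noncomputable def conv {G : Type*} [Group G] (μ₁ μ₂ : G → ℝ) : G → ℝ :=
  fun g => ∑' h, μ₁ h * μ₂ (h⁻¹ * g)

/-- `n`-fold convolution power `μ^{*n}` (with `μ^{*0} = δ_e`). -/
noncomputable def convPow {G : Type*} [Group G] (μ : G → ℝ) : ℕ → G → ℝ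
  | 0 => Set.indicator {(1 : G)} (fun _ => (1 : ℝ))
  | n + 1 => conv μ (convPow μ n)

/-- Shannon entropy of a measure on a countable set. -/
noncomputable def entropy {G : Type*} (μ : G → ℝ) : ℝ :=
  ∑' g, μ g * (-Real.log (μ g))


section WL
variable {G : Type*} [Group G] {S : Set G}

lemma wordLength_le {g : G} {l : List G} (hl : ∀ x ∈ l, x ∈ S) (hprod : l.prod = g) :
    wordLength S g ≤ l.length :=
  Nat.sInf_le ⟨l, hl, rfl, hprod⟩

lemma exists_word (hgen : Subgroup.closure S = ⊤) (hsym : ∀ s ∈ S, s⁻¹ ∈ S) (g : G) :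
    ∃ l : List G, (∀ x ∈ l, x ∈ S) ∧ l.prod = g := by
  have hg : g ∈ Subgroup.closure S := hgen ▸ Subgroup.mem_top g
  induction hg using Subgroup.closure_induction with
  | mem s hs => exact ⟨[s], by simpa using hs, by simp⟩
  | one => exact ⟨[], by simp, by simp⟩
  | mul a b _ _ iha ihb =>
      obtain ⟨la, hla, ha⟩ := iha
      obtain ⟨lb, hlb, hb⟩ := ihb
      refine ⟨la ++ lb, ?_, by simp [ha, hb]⟩
      intro x hx
      rcases List.mem_append.1 hx with h | h
      exacts [hla x h, hlb x h]
  | inv a _ iha =>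
      obtain ⟨la, hla, ha⟩ := iha
      refine ⟨(la.map fun x => x⁻¹).reverse, ?_, ?_⟩
      · intro x hx
        simp only [List.mem_reverse, List.mem_map] at hx
        obtain ⟨y, hy, rfl⟩ := hx
        exact hsym _ (hla y hy)
      · rw [← List.prod_inv_reverse, ha]

lemma exists_word_min (hgen : Subgroup.closure S = ⊤) (hsym : ∀ s ∈ S, s⁻¹ ∈ S) (g : G) :
    ∃ l : List G, (∀ x ∈ l, x ∈ S) ∧ l.length = wordLength S g ∧ l.prod = g := by
  have hne : {n | ∃ l : List G, (∀ x ∈ l, x ∈ S) ∧ l.length = n ∧ l.prod = g}.Nonempty := by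
    obtain ⟨l, hl, hp⟩ := exists_word hgen hsym g
    exact ⟨l.length, l, hl, rfl, hp⟩
  exact Nat.sInf_mem hne

lemma wordLength_one : wordLength S (1 : G) = 0 :=
  Nat.le_zero.1 (wordLength_le (l := []) (by simp) (by simp))

lemma wordLength_mul (hgen : Subgroup.closure S = ⊤) (hsym : ∀ s ∈ S, s⁻¹ ∈ S) (g k : G) :
    wordLength S (g * k) ≤ wordLength S g + wordLength S k := by
  obtain ⟨lg, hlg, hlg2, hlg3⟩ := exists_word_min hgen hsym g
  obtain ⟨lk, hlk, hlk2, hlk3⟩ := exists_word_min hgen hsym k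
  have := wordLength_le (g := g * k) (l := lg ++ lk)
    (by
      intro x hx
      rcases List.mem_append.1 hx with h | h
      exacts [hlg x h, hlk x h])
    (by simp [hlg3, hlk3])
  simpa [hlg2, hlk2] using this

/-- products of at most `n` elements of a finite set form a finite set -/
lemma finite_prods {A : Set G} (hA : A.Finite) (n : ℕ) :
    {g : G | ∃ l : List G, (∀ x ∈ l, x ∈ A) ∧ l.length ≤ n ∧ l.prod = g}.Finite := by
  have : Finite ↥A := hA
  have hfin : {l : List ↥A | l.length ≤ n}.Finite := List.finite_length_le ↥A n
  have himg : {g : G | ∃ l : List G, (∀ x ∈ l, x ∈ A) ∧ l.length ≤ n ∧ l.prod = g} ⊆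
      (fun l : List ↥A => (l.map Subtype.val).prod) '' {l : List ↥A | l.length ≤ n} := by
    rintro g ⟨l, hl, hlen, rfl⟩
    refine ⟨l.attach.map fun x => ⟨x.1, hl x.1 x.2⟩, by simpa using hlen, ?_⟩
    simp only [List.map_map, Function.comp_def]
    simp
  exact (hfin.image _).subset himg

lemma ball_finite (hgen : Subgroup.closure S = ⊤) (hsym : ∀ s ∈ S, s⁻¹ ∈ S)
    (hS : S.Finite) (n : ℕ) : {g : G | wordLength S g ≤ n}.Finite := by
  refine (finite_prods hS n).subset ?_
  intro g hg
  obtain ⟨l, hl, hlen, hp⟩ := exists_word_min hgen hsym g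
  exact ⟨l, hl, le_trans (le_of_eq hlen) hg, hp⟩

end WL

section Ball
variable {G : Type*} [Group G] {S : Set G}
variable (hgen : Subgroup.closure S = ⊤) (hsym : ∀ s ∈ S, s⁻¹ ∈ S) (hS : S.Finite)
include hgen hsym hS

lemma ball_card_submul (a b : ℕ) :
    Nat.card {g : G // wordLength S g ≤ a + b} ≤
      Nat.card {g : G // wordLength S g ≤ a} * Nat.card {g : G // wordLength S g ≤ b} := by
  have hfa : Finite {g : G // wordLength S g ≤ a} := (ball_finite hgen hsym hS a).to_subtype
  have hfb : Finite {g : G // wordLength S g ≤ b} := (ball_finite hgen hsym hS b).to_subtype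
  rw [← Nat.card_prod]
  have key : ∀ g : {g : G // wordLength S g ≤ a + b},
      ∃ p : {g : G // wordLength S g ≤ a} × {g : G // wordLength S g ≤ b},
        (p.1 : G) * (p.2 : G) = (g : G) := by
    rintro ⟨g, hg⟩
    obtain ⟨l, hl, hlen, hp⟩ := exists_word_min hgen hsym g
    refine ⟨⟨⟨(l.take a).prod, ?_⟩, ⟨(l.drop a).prod, ?_⟩⟩, ?_⟩
    · exact le_trans (wordLength_le (fun x hx => hl x (List.mem_of_mem_take hx)) rfl)
        (by simpa using List.length_take_le a l)
    · refine le_trans (wordLength_le (fun x hx => hl x (List.mem_of_mem_drop hx)) rfl) ?_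
      have : l.length ≤ a + b := le_trans (le_of_eq hlen) hg
      simp only [List.length_drop]
      omega
    · simp only
      rw [← List.prod_append, List.take_append_drop, hp]
  choose f hf using key
  refine Nat.card_le_card_of_injective f ?_
  intro x y hxy
  apply Subtype.ext
  rw [← hf x, ← hf y, hxy]

lemma ball_card_pow (N : ℕ) (m : ℕ) :
    Nat.card {g : G // wordLength S g ≤ m * N} ≤
      (Nat.card {g : G // wordLength S g ≤ N}) ^ m := by
  induction m with
  | zero =>
      simp only [Nat.zero_mul, pow_zero]
      have : {g : G | wordLength S g ≤ 0} ⊆ {(1 : G)} := by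
        intro g hg
        obtain ⟨l, hl, hlen, hp⟩ := exists_word_min hgen hsym g
        have hg' : wordLength S g ≤ 0 := hg
        have : l = [] := List.length_eq_zero_iff.1 (by omega)
        simp [this] at hp
        simp [← hp]
      calc Nat.card {g : G // wordLength S g ≤ 0}
          ≤ Nat.card ({(1 : G)} : Set G) := Nat.card_mono (Set.finite_singleton _) this
        _ = 1 := by simp
  | succ m ih =>
      have h1 : Nat.card {g : G // wordLength S g ≤ m * N + N} ≤
          Nat.card {g : G // wordLength S g ≤ m * N} * Nat.card {g : G // wordLength S g ≤ N} :=
        ball_card_submul hgen hsym hS (m * N) N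
      have h2 : (m + 1) * N = m * N + N := by ring
      rw [h2, pow_succ]
      exact le_trans h1 (Nat.mul_le_mul_right _ ih)

lemma ball_card_pos (n : ℕ) : 0 < Nat.card {g : G // wordLength S g ≤ n} := by
  have : Finite {g : G // wordLength S g ≤ n} := (ball_finite hgen hsym hS n).to_subtype
  exact Nat.card_pos_iff.2 ⟨⟨⟨1, by simp [wordLength_one]⟩⟩, this⟩

end Ball

lemma summable_of_fin_supp {G : Type*} {f : G → ℝ} (hf : (Function.support f).Finite) :
    Summable f :=
  summable_of_ne_finset_zero (s := hf.toFinset) fun b hb => by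
    by_contra hb'
    exact hb (hf.mem_toFinset.2 hb')

section Conv
variable {G : Type*} [Group G]
variable {μ : G → ℝ} (hpos : ∀ g, 0 ≤ μ g) (hfin : (Function.support μ).Finite)
include hfin

lemma conv_eq_sum (ν : G → ℝ) (g : G) :
    conv μ ν g = ∑ h ∈ hfin.toFinset, μ h * ν (h⁻¹ * g) := by
  refine tsum_eq_sum fun b hb => ?_
  have : μ b = 0 := by
    by_contra hb'
    exact hb (hfin.mem_toFinset.2 hb')
  simp [this]

include hpos in
lemma convPow_nonneg (n : ℕ) (g : G) : 0 ≤ convPow μ n g := by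
  induction n generalizing g with
  | zero => exact Set.indicator_nonneg (fun _ _ => zero_le_one) g
  | succ n ih =>
      rw [show convPow μ (n+1) = conv μ (convPow μ n) from rfl, conv_eq_sum hfin]
      exact Finset.sum_nonneg fun h _ => mul_nonneg (hpos h) (ih _)

lemma convPow_support (n : ℕ) :
    Function.support (convPow μ n) ⊆
      {g : G | ∃ l : List G, (∀ x ∈ l, x ∈ Function.support μ) ∧ l.length ≤ n ∧ l.prod = g} := by
  induction n with
  | zero =>
      intro g hg
      have : g = 1 := by
        by_contra hne
        simp only [convPow, Function.mem_support] at hg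
        exact hg (Set.indicator_of_notMem (by simp [hne]) _)
      exact ⟨[], by simp, by simp, by simp [this]⟩
  | succ n ih =>
      intro g hg
      simp only [Function.mem_support, show convPow μ (n+1) = conv μ (convPow μ n) from rfl,
        conv_eq_sum hfin] at hg
      obtain ⟨h, _, hne⟩ := Finset.exists_ne_zero_of_sum_ne_zero hg
      have hμ : μ h ≠ 0 := fun h0 => hne (by simp [h0])
      have hν : convPow μ n (h⁻¹ * g) ≠ 0 := fun h0 => hne (by simp [h0])
      obtain ⟨l, hl, hlen, hp⟩ := ih hν
      refine ⟨h :: l, ?_, by simpa using hlen, by simp [hp]⟩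
      intro x hx
      rcases List.mem_cons.1 hx with rfl | hx
      exacts [hμ, hl x hx]

lemma convPow_fin_supp (n : ℕ) : (Function.support (convPow μ n)).Finite :=
  ((finite_prods hfin n).subset (convPow_support hfin n))

include hpos in
lemma convPow_mass (htot : ∑' g, μ g = 1) (n : ℕ) : ∑' g, convPow μ n g = 1 := by
  induction n with
  | zero =>
      rw [show convPow μ 0 = Set.indicator {(1 : G)} (fun _ => (1:ℝ)) from rfl]
      rw [tsum_eq_sum (s := {(1 : G)}) (fun b hb => by
        simp only [Finset.mem_singleton] at hb
        exact Set.indicator_of_notMem (by simp [hb]) _)]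
      simp
  | succ n ih =>
      have hsupp := convPow_fin_supp hfin n
      have hsummable : Summable (convPow μ n) := summable_of_fin_supp hsupp
      have step1 : ∀ g, convPow μ (n+1) g = ∑ h ∈ hfin.toFinset, μ h * convPow μ n (h⁻¹ * g) :=
        fun g => conv_eq_sum hfin (convPow μ n) g
      calc ∑' g, convPow μ (n+1) g
          = ∑' g, ∑ h ∈ hfin.toFinset, μ h * convPow μ n (h⁻¹ * g) := by
            exact tsum_congr step1
        _ = ∑ h ∈ hfin.toFinset, ∑' g, μ h * convPow μ n (h⁻¹ * g) := by
            refine Summable.tsum_finsetSum fun h _ => ?_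
            refine Summable.mul_left _ ?_
            exact ((Equiv.mulLeft h⁻¹).summable_iff).2 hsummable
        _ = ∑ h ∈ hfin.toFinset, μ h * ∑' g, convPow μ n (h⁻¹ * g) := by
            exact Finset.sum_congr rfl fun h _ => tsum_mul_left
        _ = ∑ h ∈ hfin.toFinset, μ h * 1 := by
            refine Finset.sum_congr rfl fun h _ => ?_
            congr 1
            rw [← ih]
            exact (Equiv.mulLeft h⁻¹).tsum_eq (convPow μ n)
        _ = ∑' g, μ g := by
            simp only [mul_one]
            exact (tsum_eq_sum fun b hb => by
              by_contra hb'
              exact hb (hfin.mem_toFinset.2 hb')).symm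
        _ = 1 := htot

end Conv

section Gibbs
variable {G : Type*}

lemma gibbs (T : Finset G) (p r : G → ℝ) (hp : ∀ g ∈ T, 0 ≤ p g) (hr : ∀ g ∈ T, 0 < r g)
    (hp1 : ∑ g ∈ T, p g = 1) (hr1 : ∑ g ∈ T, r g ≤ 1) :
    ∑ g ∈ T, p g * (-Real.log (p g)) ≤ ∑ g ∈ T, p g * (-Real.log (r g)) := by
  have key : ∀ g ∈ T, p g * (-Real.log (p g)) - p g * (-Real.log (r g)) ≤ r g - p g := by
    intro g hg
    rcases eq_or_lt_of_le (hp g hg) with h0 | h0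
    · simp [← h0]
      exact le_of_lt (hr g hg)
    · have : p g * (-Real.log (p g)) - p g * (-Real.log (r g))
          = p g * Real.log (r g / p g) := by
        rw [Real.log_div (ne_of_gt (hr g hg)) (ne_of_gt h0)]
        ring
      rw [this]
      calc p g * Real.log (r g / p g) ≤ p g * (r g / p g - 1) := by
            refine mul_le_mul_of_nonneg_left ?_ (le_of_lt h0)
            exact Real.log_le_sub_one_of_pos (div_pos (hr g hg) h0)
        _ = r g - p g := by field_simp
  have hsum := Finset.sum_le_sum key
  rw [Finset.sum_sub_distrib, Finset.sum_sub_distrib, hp1] at hsum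
  linarith

lemma entropy_partition (T : Finset G) (p : G → ℝ) (f : G → ℕ)
    (hp : ∀ g ∈ T, 0 ≤ p g) (hp1 : ∑ g ∈ T, p g = 1) :
    ∑ g ∈ T, p g * (-Real.log (p g)) ≤
      Real.log (T.image f).card +
        ∑ g ∈ T, p g * Real.log ((T.filter (fun x => f x = f g)).card) := by
  classical
  have hTne : T.Nonempty := by
    by_contra hT
    rw [Finset.not_nonempty_iff_eq_empty.1 hT] at hp1
    simp at hp1
  set K : ℕ := (T.image f).card with hK
  have hKpos : 0 < K := Finset.card_pos.2 (hTne.image f)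
  set r : G → ℝ := fun g => ((T.filter (fun x => f x = f g)).card : ℝ)⁻¹ * (K : ℝ)⁻¹ with hr
  have hfibpos : ∀ g ∈ T, 0 < ((T.filter (fun x => f x = f g)).card : ℝ) := by
    intro g hg
    have : g ∈ T.filter (fun x => f x = f g) := Finset.mem_filter.2 ⟨hg, rfl⟩
    exact_mod_cast Finset.card_pos.2 ⟨g, this⟩
  have hrpos : ∀ g ∈ T, 0 < r g := fun g hg =>
    mul_pos (inv_pos.2 (hfibpos g hg)) (inv_pos.2 (by exact_mod_cast hKpos))
  have hr1 : ∑ g ∈ T, r g ≤ 1 := by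
    have := Finset.sum_fiberwise_of_maps_to (g := f) (t := T.image f)
      (fun x hx => Finset.mem_image_of_mem f hx) r
    rw [← this]
    have inner : ∀ y ∈ T.image f,
        ∑ g ∈ T.filter (fun x => f x = y), r g = (K : ℝ)⁻¹ := by
      intro y hy
      have : ∀ g ∈ T.filter (fun x => f x = y), r g
          = ((T.filter (fun x => f x = y)).card : ℝ)⁻¹ * (K : ℝ)⁻¹ := by
        intro g hg
        obtain ⟨hgT, hfg⟩ := Finset.mem_filter.1 hg
        simp [hr, hfg]
      rw [Finset.sum_congr rfl this, Finset.sum_const, nsmul_eq_mul]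
      obtain ⟨g, hgy⟩ := Finset.mem_image.1 hy
      have hcard : (0 : ℝ) < ((T.filter (fun x => f x = y)).card : ℝ) := by
        have : g ∈ T.filter (fun x => f x = y) := Finset.mem_filter.2 ⟨hgy.1, hgy.2⟩
        exact_mod_cast Finset.card_pos.2 ⟨g, this⟩
      rw [← mul_assoc, mul_inv_cancel₀ (ne_of_gt hcard), one_mul]
    rw [Finset.sum_congr rfl inner, Finset.sum_const, nsmul_eq_mul]
    rw [mul_inv_cancel₀ (by exact_mod_cast ne_of_gt hKpos)]
  have hgibbs := gibbs T p r hp hrpos hp1 hr1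
  refine le_trans hgibbs (le_of_eq ?_)
  have hlog : ∀ g ∈ T, p g * (-Real.log (r g))
      = p g * Real.log ((T.filter (fun x => f x = f g)).card) + p g * Real.log K := by
    intro g hg
    rw [hr]
    rw [Real.log_mul (ne_of_gt (inv_pos.2 (hfibpos g hg)))
      (ne_of_gt (inv_pos.2 (by exact_mod_cast hKpos : (0:ℝ) < (K:ℝ)))),
      Real.log_inv, Real.log_inv]
    ring
  rw [Finset.sum_congr rfl hlog, Finset.sum_add_distrib, ← Finset.sum_mul, hp1]
  ring

end Gibbs

section Prod
variable {G : Type*} [Group G] {S : Set G}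

lemma wordLength_prod_le (hgen : Subgroup.closure S = ⊤) (hsym : ∀ s ∈ S, s⁻¹ ∈ S) {C : ℕ} :
    ∀ l : List G, (∀ x ∈ l, wordLength S x ≤ C) → wordLength S l.prod ≤ l.length * C := by
  intro l
  induction l with
  | nil => simp [wordLength_one]
  | cons a t ih =>
      intro hx
      have h1 : wordLength S (a * t.prod) ≤ wordLength S a + wordLength S t.prod :=
        wordLength_mul hgen hsym a t.prod
      have h2 : wordLength S a ≤ C := hx a (by simp)
      have h3 : wordLength S t.prod ≤ t.length * C := ih fun x hxt => hx x (by simp [hxt])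
      simp only [List.prod_cons, List.length_cons]
      calc wordLength S (a * t.prod) ≤ C + t.length * C := by omega
        _ = (t.length + 1) * C := by ring

end Prod

/-- The fundamental inequality of Guivarc'h: for a finitely supported probability measure `μ`
on a finitely generated group with word metric, the asymptotic entropy `h`, the drift `ℓ`
and the growth rate `v = liminf log|B_n| / n` satisfy `h ≤ ℓ v`. -/
theorem stmt_5 {G : Type*} [Group G] [Countable G] (S : Finset G)
    (hgen : Subgroup.closure (S : Set G) = ⊤) (hsym : ∀ s ∈ S, s⁻¹ ∈ S)
    (μ : G → ℝ) (hpos : ∀ g, 0 ≤ μ g) (htot : ∑' g, μ g = 1)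
    (hfin : (Function.support μ).Finite)
    (h ℓ v : ℝ)
    (hv : v = liminf (fun n : ℕ =>
      Real.log (Nat.card {g : G // wordLength (S : Set G) g ≤ n}) / n) atTop)
    (hh : Tendsto (fun n : ℕ => entropy (convPow μ n) / n) atTop (nhds h))
    (hl : Tendsto (fun n : ℕ =>
      (∑' g, convPow μ n g * (wordLength (S : Set G) g : ℝ)) / n) atTop (nhds ℓ)) :
    h ≤ ℓ * v := by
  classical
  set W : Set G := (S : Set G) with hW
  have hsym' : ∀ s ∈ W, s⁻¹ ∈ W := by
    intro s hs
    exact Finset.mem_coe.2 (hsym s (Finset.mem_coe.1 hs))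
  have hSfin : W.Finite := S.finite_toSet
  have pn_nonneg : ∀ n g, 0 ≤ convPow μ n g := fun n g => convPow_nonneg hpos hfin n g
  -- ℓ is nonnegative
  have hlpos : 0 ≤ ℓ := by
    refine ge_of_tendsto' hl fun n => ?_
    refine div_nonneg (tsum_nonneg fun g => ?_) (Nat.cast_nonneg n)
    exact mul_nonneg (pn_nonneg n g) (Nat.cast_nonneg _)
  -- ball cardinalities
  have ballpos : ∀ n : ℕ, 0 < Nat.card {g : G // wordLength W g ≤ n} :=
    fun n => ball_card_pos hgen hsym' hSfin n
  set a : ℕ → ℝ := fun n => Real.log (Nat.card {g : G // wordLength W g ≤ n}) / n with ha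
  -- a is bounded above
  have habove : ∀ n : ℕ, a n ≤ max 0 (Real.log (Nat.card {g : G // wordLength W g ≤ 1})) := by
    intro n
    rcases Nat.eq_zero_or_pos n with rfl | hn
    · simp [ha]
    · have hsub : Nat.card {g : G // wordLength W g ≤ n} ≤
          (Nat.card {g : G // wordLength W g ≤ 1}) ^ n := by
        have := ball_card_pow hgen hsym' hSfin 1 n
        simpa using this
      have hlog : Real.log (Nat.card {g : G // wordLength W g ≤ n}) ≤
          n * Real.log (Nat.card {g : G // wordLength W g ≤ 1}) := by
        calc Real.log (Nat.card {g : G // wordLength W g ≤ n})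
            ≤ Real.log ((Nat.card {g : G // wordLength W g ≤ 1} : ℝ) ^ n) := by
              apply Real.log_le_log (by exact_mod_cast ballpos n)
              exact_mod_cast hsub
          _ = n * Real.log (Nat.card {g : G // wordLength W g ≤ 1}) := by
              rw [Real.log_pow]
      have hnpos : (0 : ℝ) < n := by exact_mod_cast hn
      refine le_max_of_le_right ?_
      rw [div_le_iff₀ hnpos]
      calc Real.log (Nat.card {g : G // wordLength W g ≤ n})
          ≤ n * Real.log (Nat.card {g : G // wordLength W g ≤ 1}) := hlog
        _ = Real.log (Nat.card {g : G // wordLength W g ≤ 1}) * n := by ring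
  -- word length of elements of the support
  set C : ℕ := hfin.toFinset.sup (wordLength W) with hC
  have hwlC : ∀ x ∈ Function.support μ, wordLength W x ≤ C :=
    fun x hx => Finset.le_sup (hfin.mem_toFinset.2 hx)
  -- main estimate, for every ε > 0
  have main : ∀ ε : ℝ, 0 < ε → h ≤ (v + ε) * ℓ := by
    intro ε hε
    -- choose N with log |B_N| / N < v + ε
    have hliminf : liminf a atTop < v + ε := by
      rw [← hv]; linarith
    have hcb : IsCoboundedUnder (· ≥ ·) atTop a :=
      isCoboundedUnder_ge_of_eventually_le atTop (Eventually.of_forall habove)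
    have hfreq : ∃ᶠ n in atTop, a n < v + ε := frequently_lt_of_liminf_lt hcb hliminf
    obtain ⟨N, hN1, hNlt⟩ : ∃ N : ℕ, 1 ≤ N ∧ a N < v + ε := by
      obtain ⟨N, h1, h2⟩ := ((hfreq.and_eventually (eventually_ge_atTop 1)).exists)
      exact ⟨N, h2, h1⟩
    set β : ℝ := Real.log (Nat.card {g : G // wordLength W g ≤ N}) with hβ
    have hNpos : (0 : ℝ) < N := by exact_mod_cast hN1
    have hβ0 : 0 ≤ β := Real.log_nonneg (by exact_mod_cast ballpos N)
    have hβle : β < (v + ε) * N := by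
      have := (div_lt_iff₀ hNpos).1 hNlt
      linarith [this]
    -- the key pointwise estimate
    have key : ∀ n : ℕ, 1 ≤ n → entropy (convPow μ n) / n ≤
        Real.log ((n * C + 1 : ℕ) : ℝ) / n +
          (β / N) * ((∑' g, convPow μ n g * (wordLength W g : ℝ)) / n) + β * (1 / n) := by
      intro n hn
      set p : G → ℝ := convPow μ n with hp
      set T : Finset G := (finite_prods hfin n).toFinset with hT
      have hzero : ∀ g, g ∉ T → p g = 0 := by
        intro g hg
        by_contra hg'
        exact hg ((finite_prods hfin n).mem_toFinset.2 (convPow_support hfin n hg'))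
      have hp1 : ∑ g ∈ T, p g = 1 := by
        rw [← tsum_eq_sum (L := SummationFilter.unconditional G) hzero]
        exact convPow_mass hpos hfin htot n
      have hent : entropy p = ∑ g ∈ T, p g * (-Real.log (p g)) := by
        refine tsum_eq_sum fun b hb => ?_
        rw [hzero b hb]; simp
      set Ln : ℝ := ∑' g, p g * (wordLength W g : ℝ) with hLn
      have hLnsum : Ln = ∑ g ∈ T, p g * (wordLength W g : ℝ) := by
        refine tsum_eq_sum fun b hb => ?_
        rw [hzero b hb]; simp
      have hLnpos : 0 ≤ Ln := by
        rw [hLnsum]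
        exact Finset.sum_nonneg fun g _ => mul_nonneg (pn_nonneg n g) (Nat.cast_nonneg _)
      set f : G → ℕ := fun g => wordLength W g / N with hf
      have hEP := entropy_partition T p f (fun g _ => pn_nonneg n g) hp1
      have hTne : T.Nonempty := by
        by_contra hTe
        rw [Finset.not_nonempty_iff_eq_empty.1 hTe] at hp1
        simp at hp1
      -- bound on the number of cells
      have hwl_le : ∀ g ∈ T, wordLength W g ≤ n * C := by
        intro g hg
        obtain ⟨l, hl, hlen, rfl⟩ := (finite_prods hfin n).mem_toFinset.1 hg
        calc wordLength W l.prod ≤ l.length * C :=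
              wordLength_prod_le hgen hsym' l fun x hx => hwlC x (hl x hx)
          _ ≤ n * C := Nat.mul_le_mul_right C hlen
      have hKcard : (T.image f).card ≤ n * C + 1 := by
        have hsub : T.image f ⊆ Finset.range (n * C + 1) := by
          intro k hk
          obtain ⟨g, hg, rfl⟩ := Finset.mem_image.1 hk
          refine Finset.mem_range.2 ?_
          have : f g ≤ wordLength W g := Nat.div_le_self _ _
          have := hwl_le g hg
          omega
        calc (T.image f).card ≤ (Finset.range (n * C + 1)).card := Finset.card_le_card hsub
          _ = n * C + 1 := Finset.card_range _
      have hKpos : 0 < (T.image f).card := Finset.card_pos.2 (hTne.image f)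
      have hlogK : Real.log ((T.image f).card) ≤ Real.log ((n * C + 1 : ℕ) : ℝ) := by
        apply Real.log_le_log (by exact_mod_cast hKpos)
        exact_mod_cast hKcard
      -- bound on the fiber cardinalities
      have hfibv : ∀ g ∈ T, Real.log ((T.filter fun x => f x = f g).card)
          ≤ ((f g : ℝ) + 1) * β := by
        intro g hg
        have hsub : ↑(T.filter fun x => f x = f g) ⊆
            {x : G | wordLength W x ≤ (f g + 1) * N} := by
          intro x hx
          simp only [Finset.coe_filter, Set.mem_setOf_eq] at hx
          obtain ⟨_, hfx⟩ := hx
          have hNn : 0 < N := hN1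
          simp only [Set.mem_setOf_eq]
          have hfx' : wordLength W x / N = f g := hfx
          have hlt : wordLength W x / N < f g + 1 := by omega
          have := (Nat.div_lt_iff_lt_mul hNn).1 hlt
          omega
        have hcard : (T.filter fun x => f x = f g).card ≤
            (Nat.card {x : G // wordLength W x ≤ N}) ^ (f g + 1) := by
          calc (T.filter fun x => f x = f g).card
              = Nat.card ↑(T.filter fun x => f x = f g : Finset G) :=
                (Nat.card_eq_finsetCard _).symm
            _ ≤ Nat.card {x : G | wordLength W x ≤ (f g + 1) * N} :=
                Nat.card_mono (ball_finite hgen hsym' hSfin _) hsub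
            _ ≤ (Nat.card {x : G // wordLength W x ≤ N}) ^ (f g + 1) :=
                ball_card_pow hgen hsym' hSfin N (f g + 1)
        rcases Nat.eq_zero_or_pos (T.filter fun x => f x = f g).card with h0 | hpos'
        · rw [h0]
          simp only [Nat.cast_zero, Real.log_zero]
          positivity
        · calc Real.log ((T.filter fun x => f x = f g).card)
              ≤ Real.log (((Nat.card {x : G // wordLength W x ≤ N}) : ℝ) ^ (f g + 1)) := by
                apply Real.log_le_log (by exact_mod_cast hpos')
                exact_mod_cast hcard
            _ = ((f g : ℝ) + 1) * β := by
                rw [Real.log_pow]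
                push_cast
                ring
      -- assemble
      have hsum2 : ∑ g ∈ T, p g * Real.log ((T.filter fun x => f x = f g).card)
          ≤ β * (Ln / N + 1) := by
        have step1 : ∑ g ∈ T, p g * Real.log ((T.filter fun x => f x = f g).card)
            ≤ ∑ g ∈ T, p g * (((f g : ℝ) + 1) * β) := by
          refine Finset.sum_le_sum fun g hg => ?_
          exact mul_le_mul_of_nonneg_left (hfibv g hg) (pn_nonneg n g)
        have step2 : ∑ g ∈ T, p g * (((f g : ℝ) + 1) * β)
            = β * ∑ g ∈ T, p g * (f g : ℝ) + β := by
          have hterm : ∀ g ∈ T, p g * (((f g : ℝ) + 1) * β)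
              = β * (p g * (f g : ℝ)) + β * p g := fun g _ => by ring
          rw [Finset.sum_congr rfl hterm, Finset.sum_add_distrib, ← Finset.mul_sum,
            ← Finset.mul_sum, hp1, mul_one]
        have step3 : ∑ g ∈ T, p g * (f g : ℝ) ≤ Ln / N := by
          rw [hLnsum, Finset.sum_div]
          refine Finset.sum_le_sum fun g hg => ?_
          rw [mul_div_assoc]
          refine mul_le_mul_of_nonneg_left ?_ (pn_nonneg n g)
          exact Nat.cast_div_le
        calc ∑ g ∈ T, p g * Real.log ((T.filter fun x => f x = f g).card)
            ≤ ∑ g ∈ T, p g * (((f g : ℝ) + 1) * β) := step1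
          _ = β * ∑ g ∈ T, p g * (f g : ℝ) + β := step2
          _ ≤ β * (Ln / N) + β := by
              have := mul_le_mul_of_nonneg_left step3 hβ0
              linarith
          _ = β * (Ln / N + 1) := by ring
      have hfinal : entropy p ≤ Real.log ((n * C + 1 : ℕ) : ℝ) + β * (Ln / N + 1) := by
        rw [hent]
        calc ∑ g ∈ T, p g * (-Real.log (p g))
            ≤ Real.log ((T.image f).card) +
                ∑ g ∈ T, p g * Real.log ((T.filter fun x => f x = f g).card) := hEP
          _ ≤ Real.log ((n * C + 1 : ℕ) : ℝ) + β * (Ln / N + 1) := add_le_add hlogK hsum2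
      -- divide by n
      have hnpos : (0 : ℝ) < n := by exact_mod_cast hn
      have hdiv : entropy p / n ≤ (Real.log ((n * C + 1 : ℕ) : ℝ) + β * (Ln / N + 1)) / n :=
        div_le_div_of_nonneg_right hfinal hnpos.le
      calc entropy p / n ≤ (Real.log ((n * C + 1 : ℕ) : ℝ) + β * (Ln / N + 1)) / n := hdiv
        _ = Real.log ((n * C + 1 : ℕ) : ℝ) / n + (β / N) * (Ln / n) + β * (1 / n) := by
            field_simp
            ring
    -- limits
    have T1 : Tendsto (fun n : ℕ => Real.log ((n * C + 1 : ℕ) : ℝ) / n) atTop (nhds 0) := by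
      have hlogn : Tendsto (fun n : ℕ => Real.log n / n) atTop (nhds 0) := by
        have := Real.isLittleO_log_id_atTop.tendsto_div_nhds_zero
        exact (this.comp tendsto_natCast_atTop_atTop)
      have hconst : Tendsto (fun n : ℕ => Real.log ((C : ℝ) + 1) / n) atTop (nhds 0) :=
        tendsto_const_div_atTop_nhds_zero_nat _
      have hsum := hconst.add hlogn
      rw [add_zero] at hsum
      refine squeeze_zero' ?_ ?_ hsum
      · filter_upwards with n
        exact div_nonneg (Real.log_nonneg (by exact_mod_cast Nat.succ_le_of_lt (Nat.lt_succ_of_le (Nat.zero_le _)))) (Nat.cast_nonneg n)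
      · filter_upwards [eventually_ge_atTop 1] with n hn
        have hnpos : (0 : ℝ) < n := by exact_mod_cast hn
        have hle : ((n * C + 1 : ℕ) : ℝ) ≤ ((C : ℝ) + 1) * n := by
          have hn1 : (1 : ℝ) ≤ n := by exact_mod_cast hn
          have hC0 : (0 : ℝ) ≤ C := Nat.cast_nonneg C
          push_cast
          nlinarith [hn1, hC0]
        have hlog : Real.log ((n * C + 1 : ℕ) : ℝ) ≤ Real.log (((C : ℝ) + 1) * n) :=
          Real.log_le_log (by exact_mod_cast Nat.succ_le_of_lt (Nat.lt_succ_of_le (Nat.zero_le _))) hle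
        have heq : Real.log (((C : ℝ) + 1) * n) = Real.log ((C : ℝ) + 1) + Real.log n :=
          Real.log_mul (by positivity) (ne_of_gt hnpos)
        rw [← add_div, ← heq]
        exact div_le_div_of_nonneg_right hlog hnpos.le
    have T2 : Tendsto (fun n : ℕ =>
        (β / N) * ((∑' g, convPow μ n g * (wordLength W g : ℝ)) / n)) atTop
        (nhds ((β / N) * ℓ)) := hl.const_mul _
    have T3 : Tendsto (fun n : ℕ => β * (1 / (n : ℝ))) atTop (nhds 0) := by
      have := tendsto_one_div_atTop_nhds_zero_nat.const_mul β
      simpa using this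
    have hb : Tendsto (fun n : ℕ => Real.log ((n * C + 1 : ℕ) : ℝ) / n +
        (β / N) * ((∑' g, convPow μ n g * (wordLength W g : ℝ)) / n) + β * (1 / n)) atTop
        (nhds ((β / N) * ℓ)) := by
      have := (T1.add T2).add T3
      simpa using this
    have hle : h ≤ (β / N) * ℓ := by
      refine le_of_tendsto_of_tendsto hh hb ?_
      filter_upwards [eventually_ge_atTop 1] with n hn
      exact key n hn
    calc h ≤ (β / N) * ℓ := hle
      _ ≤ (v + ε) * ℓ := by
          refine mul_le_mul_of_nonneg_right ?_ hlpos
          rw [div_le_iff₀ hNpos]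
          linarith
  -- conclude
  by_contra hcon
  push_neg at hcon
  have hl1 : 0 < ℓ + 1 := by linarith
  set ε : ℝ := (h - ℓ * v) / (ℓ + 1) with hεdef
  have hε : 0 < ε := div_pos (by linarith) hl1
  have this2 : h ≤ v * ℓ + ε * ℓ := by
    have := main ε hε
    rw [add_mul] at this
    exact this
  have hε2 : ε * (ℓ + 1) = h - ℓ * v := div_mul_cancel₀ _ (ne_of_gt hl1)
  have hε3 : ε * ℓ + ε = h - ℓ * v := by rw [← hε2]; ring
  have hvl : v * ℓ = ℓ * v := mul_comm v ℓ
  linarith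
end

section
/- Let $G$ and $H$ be groups with finite symmetric generating sets, and let $F_G(z) = \sum_{n\geq 0} |S^n_G| z^n$ and $F_H(z)$ be their growth series (where $S^n$ denotes the sphere of radius $n$ for the word metric). Then the growth series of the free product $G * H$ with respect to the union of the generating sets satisfies $F_{G*H} = \frac{F_G F_H}{1 - (F_G - 1)(F_H - 1)}$ as formal power series. -/
/-- The growth series of a group with respect to a generating set: the formal power series
whose `n`-th coefficient is the cardinality of the sphere of radius `n`. -/
noncomputable def growthSeries {G : Type*} [Group G] (S : Set G) : PowerSeries ℝ :=
  PowerSeries.mk fun n => (Nat.card {g : G // wordLength S g = n} : ℝ)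

set_option linter.unusedSectionVars false
set_option maxHeartbeats 1000000

namespace FPG

section One


variable {G : Type*} [Group G]

lemma wordLength_le (S : Set G) {g : G} {l : List G} (hl : ∀ x ∈ l, x ∈ S)
    (hp : l.prod = g) : wordLength S g ≤ l.length :=
  Nat.sInf_le ⟨l, hl, rfl, hp⟩

lemma wordLength_spec (S : Set G) (g : G)
    (h : ∃ l : List G, (∀ x ∈ l, x ∈ S) ∧ l.prod = g) :
    ∃ l : List G, (∀ x ∈ l, x ∈ S) ∧ l.length = wordLength S g ∧ l.prod = g := by
  obtain ⟨l, hl, hp⟩ := h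
  have hne : {n | ∃ l : List G, (∀ x ∈ l, x ∈ S) ∧ l.length = n ∧ l.prod = g}.Nonempty :=
    ⟨l.length, l, hl, rfl, hp⟩
  obtain ⟨m, hm, hlen, hprod⟩ := Nat.sInf_mem hne
  exact ⟨m, hm, hlen, hprod⟩

lemma exists_rep {S : Set G} (hgen : Subgroup.closure S = ⊤) (hsym : ∀ s ∈ S, s⁻¹ ∈ S)
    (g : G) : ∃ l : List G, (∀ x ∈ l, x ∈ S) ∧ l.prod = g := by
  have hg : g ∈ Subgroup.closure S := hgen ▸ Subgroup.mem_top g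
  induction hg using Subgroup.closure_induction with
  | mem x hx => exact ⟨[x], by simpa using hx, by simp⟩
  | one => exact ⟨[], by simp, by simp⟩
  | mul x y _ _ ihx ihy =>
    obtain ⟨l1, h1, p1⟩ := ihx
    obtain ⟨l2, h2, p2⟩ := ihy
    exact ⟨l1 ++ l2, fun x hx => (List.mem_append.1 hx).elim (h1 x) (h2 x), by simp [p1, p2]⟩
  | inv x _ ih =>
    obtain ⟨l, hl, pl⟩ := ih
    refine ⟨(l.map (·⁻¹)).reverse, ?_, ?_⟩
    · intro x hx
      simp only [List.mem_reverse, List.mem_map] at hx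
      obtain ⟨y, hy, rfl⟩ := hx
      exact hsym y (hl y hy)
    · rw [List.prod_reverse_noncomm, List.map_map]
      simp [← pl]

lemma wordLength_one (S : Set G) : wordLength S 1 = 0 :=
  Nat.le_zero.1 (wordLength_le S (l := []) (by simp) (by simp))

lemma wordLength_eq_zero_iff {S : Set G} (hgen : Subgroup.closure S = ⊤)
    (hsym : ∀ s ∈ S, s⁻¹ ∈ S) {g : G} : wordLength S g = 0 ↔ g = 1 := by
  constructor
  · intro h
    obtain ⟨l, hl, hlen, hp⟩ := wordLength_spec S g (exists_rep hgen hsym g)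
    rw [h, List.length_eq_zero_iff] at hlen
    subst hlen; simpa using hp.symm
  · rintro rfl; exact wordLength_one S

lemma wordLength_mul_le (S : Set G) {g h : G}
    (hg : ∃ l : List G, (∀ x ∈ l, x ∈ S) ∧ l.prod = g)
    (hh : ∃ l : List G, (∀ x ∈ l, x ∈ S) ∧ l.prod = h) :
    wordLength S (g * h) ≤ wordLength S g + wordLength S h := by
  obtain ⟨l1, h1, len1, p1⟩ := wordLength_spec S g hg
  obtain ⟨l2, h2, len2, p2⟩ := wordLength_spec S h hh
  calc wordLength S (g * h) ≤ (l1 ++ l2).length :=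
        wordLength_le S (fun x hx => (List.mem_append.1 hx).elim (h1 x) (h2 x)) (by simp [p1, p2])
    _ = _ := by simp [len1, len2]


end One

section Two


variable {G H : Type*} [Group G] [Group H]

/-- Nontriviality of a syllable. -/
def Ne1 : G ⊕ H → Prop := Sum.elim (· ≠ 1) (· ≠ 1)

/-- Reduced (normal form) words. -/
def Red (l : List (G ⊕ H)) : Prop :=
  l.Chain' (fun a b => a.isLeft ≠ b.isLeft) ∧ ∀ x ∈ l, Ne1 x

/-- The head is not a left (G) syllable. -/
def NLH : List (G ⊕ H) → Prop
  | .inl _ :: _ => False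
  | _ => True

/-- The head is not a right (H) syllable. -/
def NRH : List (G ⊕ H) → Prop
  | .inr _ :: _ => False
  | _ => True

lemma red_nil : Red ([] : List (G ⊕ H)) := ⟨List.isChain_nil, by simp⟩

lemma Red.tail {x : G ⊕ H} {t : List (G ⊕ H)} (h : Red (x :: t)) : Red t :=
  ⟨h.1.tail, fun y hy => h.2 y (List.mem_cons_of_mem _ hy)⟩

lemma Red.head_ne {x : G ⊕ H} {t : List (G ⊕ H)} (h : Red (x :: t)) : Ne1 x :=
  h.2 x (List.mem_cons_self)

lemma red_inl_cons {g : G} {t : List (G ⊕ H)} (hg : g ≠ 1) (ht : Red t) (hn : NLH t) :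
    Red ((.inl g : G ⊕ H) :: t) := by
  constructor
  · refine List.isChain_cons.mpr ?_
    refine ⟨?_, ht.1⟩
    intro y hy
    cases t with
    | nil => simp at hy
    | cons a t' =>
      simp only [List.head?_cons, Option.mem_def, Option.some.injEq] at hy
      subst hy
      cases a with
      | inl => exact (hn : False).elim
      | inr => simp
  · intro x hx
    rcases List.mem_cons.1 hx with rfl | hx
    · exact hg
    · exact ht.2 x hx

lemma red_inr_cons {h : H} {t : List (G ⊕ H)} (hh : h ≠ 1) (ht : Red t) (hn : NRH t) :
    Red ((.inr h : G ⊕ H) :: t) := by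
  constructor
  · refine List.isChain_cons.mpr ?_
    refine ⟨?_, ht.1⟩
    intro y hy
    cases t with
    | nil => simp at hy
    | cons a t' =>
      simp only [List.head?_cons, Option.mem_def, Option.some.injEq] at hy
      subst hy
      cases a with
      | inl => simp
      | inr => exact (hn : False).elim
  · intro x hx
    rcases List.mem_cons.1 hx with rfl | hx
    · exact hh
    · exact ht.2 x hx

lemma Red.inl_cons_nlh {g : G} {t : List (G ⊕ H)} (h : Red ((.inl g : G ⊕ H) :: t)) : NLH t := by
  cases t with
  | nil => trivial
  | cons a t' =>
    cases a with
    | inl g' =>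
      have := List.isChain_cons_cons.1 h.1
      simp at this
    | inr => trivial

lemma Red.inr_cons_nrh {x : H} {t : List (G ⊕ H)} (h : Red ((.inr x : G ⊕ H) :: t)) : NRH t := by
  cases t with
  | nil => trivial
  | cons a t' =>
    cases a with
    | inl => trivial
    | inr h' =>
      have := List.isChain_cons_cons.1 h.1
      simp at this

open scoped Classical in
/-- Prepend a `G`-syllable to a word, merging/cancelling as needed. -/
noncomputable def consG (g : G) : List (G ⊕ H) → List (G ⊕ H)
  | [] => if g = 1 then [] else [.inl g]
  | .inl g' :: t => if g * g' = 1 then t else .inl (g * g') :: t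
  | .inr h :: t => if g = 1 then .inr h :: t else .inl g :: .inr h :: t

open scoped Classical in
/-- Prepend an `H`-syllable to a word, merging/cancelling as needed. -/
noncomputable def consH (h : H) : List (G ⊕ H) → List (G ⊕ H)
  | [] => if h = 1 then [] else [.inr h]
  | .inr h' :: t => if h * h' = 1 then t else .inr (h * h') :: t
  | .inl g :: t => if h = 1 then .inl g :: t else .inr h :: .inl g :: t

open scoped Classical in
lemma consG_nil (g : G) : consG (H := H) g [] = if g = 1 then [] else [.inl g] := rfl
open scoped Classical in
lemma consG_inl (g g' : G) (t : List (G ⊕ H)) :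
    consG g (.inl g' :: t) = if g * g' = 1 then t else .inl (g * g') :: t := rfl
open scoped Classical in
lemma consG_inr (g : G) (x : H) (t : List (G ⊕ H)) :
    consG g (.inr x :: t) = if g = 1 then .inr x :: t else .inl g :: .inr x :: t := rfl
open scoped Classical in
lemma consH_nil (h : H) : consH (G := G) h [] = if h = 1 then [] else [.inr h] := rfl
open scoped Classical in
lemma consH_inr (h h' : H) (t : List (G ⊕ H)) :
    consH h (.inr h' :: t) = if h * h' = 1 then t else .inr (h * h') :: t := rfl
open scoped Classical in
lemma consH_inl (h : H) (g : G) (t : List (G ⊕ H)) :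
    consH h (.inl g :: t) = if h = 1 then .inl g :: t else .inr h :: .inl g :: t := rfl

open scoped Classical in
lemma consG_nlh {g : G} {l : List (G ⊕ H)} (hl : NLH l) :
    consG g l = if g = 1 then l else .inl g :: l := by
  cases l with
  | nil => rfl
  | cons a t => cases a with
    | inl => exact (hl : False).elim
    | inr => rfl

open scoped Classical in
lemma consH_nrh {h : H} {l : List (G ⊕ H)} (hl : NRH l) :
    consH h l = if h = 1 then l else .inr h :: l := by
  cases l with
  | nil => rfl
  | cons a t => cases a with
    | inl => rfl
    | inr => exact (hl : False).elim

lemma red_consG (g : G) {l : List (G ⊕ H)} (hl : Red l) : Red (consG g l) := by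
  classical
  cases l with
  | nil =>
    rw [consG_nil]
    split_ifs with h
    · exact red_nil
    · exact red_inl_cons h red_nil trivial
  | cons a t =>
    cases a with
    | inl g' =>
      rw [consG_inl]
      split_ifs with h
      · exact hl.tail
      · exact red_inl_cons h hl.tail hl.inl_cons_nlh
    | inr x =>
      rw [consG_inr]
      split_ifs with h
      · exact hl
      · exact red_inl_cons h hl trivial

lemma red_consH (h : H) {l : List (G ⊕ H)} (hl : Red l) : Red (consH h l) := by
  classical
  cases l with
  | nil =>
    rw [consH_nil]
    split_ifs with hh
    · exact red_nil
    · exact red_inr_cons hh red_nil trivial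
  | cons a t =>
    cases a with
    | inl g' =>
      rw [consH_inl]
      split_ifs with hh
      · exact hl
      · exact red_inr_cons hh hl trivial
    | inr x =>
      rw [consH_inr]
      split_ifs with hh
      · exact hl.tail
      · exact red_inr_cons hh hl.tail hl.inr_cons_nrh

lemma consG_one {l : List (G ⊕ H)} (hl : Red l) : consG (1 : G) l = l := by
  classical
  cases l with
  | nil => rw [consG_nil, if_pos rfl]
  | cons a t =>
    cases a with
    | inl g' =>
      have hg' : g' ≠ 1 := hl.head_ne
      rw [consG_inl, one_mul, if_neg hg']
    | inr x => rw [consG_inr, if_pos rfl]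

lemma consH_one {l : List (G ⊕ H)} (hl : Red l) : consH (1 : H) l = l := by
  classical
  cases l with
  | nil => rw [consH_nil, if_pos rfl]
  | cons a t =>
    cases a with
    | inl g' => rw [consH_inl, if_pos rfl]
    | inr x =>
      have hx : x ≠ 1 := hl.head_ne
      rw [consH_inr, one_mul, if_neg hx]

lemma consG_mul (g₁ g₂ : G) {l : List (G ⊕ H)} (hl : Red l) :
    consG (g₁ * g₂) l = consG g₁ (consG g₂ l) := by
  classical
  cases l with
  | nil =>
    rw [consG_nil (g := g₂)]
    split_ifs with h2
    · subst h2; rw [mul_one]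
    · rw [consG_nil, consG_inl]
  | cons a t =>
    cases a with
    | inl g' =>
      rw [consG_inl (g := g₂)]
      split_ifs with h2
      · rw [consG_nlh hl.inl_cons_nlh, consG_inl]
        have h : g₁ * g₂ * g' = g₁ := by rw [mul_assoc, h2, mul_one]
        rw [h]
      · rw [consG_inl, consG_inl, mul_assoc]
    | inr x =>
      rw [consG_inr (g := g₂)]
      split_ifs with h2
      · subst h2; rw [mul_one]
      · rw [consG_inr, consG_inl]

lemma consH_mul (h₁ h₂ : H) {l : List (G ⊕ H)} (hl : Red l) :
    consH (h₁ * h₂) l = consH h₁ (consH h₂ l) := by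
  classical
  cases l with
  | nil =>
    rw [consH_nil (h := h₂)]
    split_ifs with h2
    · subst h2; rw [mul_one]
    · rw [consH_nil, consH_inr]
  | cons a t =>
    cases a with
    | inr x =>
      rw [consH_inr (h := h₂)]
      split_ifs with h2
      · rw [consH_nrh hl.inr_cons_nrh, consH_inr]
        have h : h₁ * h₂ * x = h₁ := by rw [mul_assoc, h2, mul_one]
        rw [h]
      · rw [consH_inr, consH_inr, mul_assoc]
    | inl g =>
      rw [consH_inl (h := h₂)]
      split_ifs with h2
      · subst h2; rw [mul_one]
      · rw [consH_inl, consH_inr]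

section Equiv

open Monoid

/-- The set of reduced words as a type. -/
def W (G H : Type*) [Group G] [Group H] := {l : List (G ⊕ H) // Red l}

/-- Prepending a `G`-syllable as an action on reduced words. -/
noncomputable def phiG : G →* Function.End (W G H) where
  toFun g := fun w => ⟨consG g w.1, red_consG g w.2⟩
  map_one' := funext fun w => Subtype.ext (consG_one w.2)
  map_mul' g₁ g₂ := funext fun w => Subtype.ext (consG_mul g₁ g₂ w.2)

/-- Prepending an `H`-syllable as an action on reduced words. -/
noncomputable def phiH : H →* Function.End (W G H) where
  toFun h := fun w => ⟨consH h w.1, red_consH h w.2⟩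
  map_one' := funext fun w => Subtype.ext (consH_one w.2)
  map_mul' h₁ h₂ := funext fun w => Subtype.ext (consH_mul h₁ h₂ w.2)

/-- The normal form of an element of the coproduct. -/
noncomputable def toW (k : Coprod G H) : W G H :=
  Coprod.lift phiG phiH k ⟨[], red_nil⟩

/-- The product of the syllables of a word. -/
noncomputable def prodW (l : List (G ⊕ H)) : Coprod G H :=
  (l.map (Sum.elim Coprod.inl Coprod.inr)).prod

lemma prodW_nil : prodW ([] : List (G ⊕ H)) = 1 := rfl

lemma prodW_cons (a : G ⊕ H) (t : List (G ⊕ H)) :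
    prodW (a :: t) = Sum.elim (Coprod.inl (N := H)) Coprod.inr a * prodW t := by
  simp [prodW]

lemma prodW_consG (g : G) (l : List (G ⊕ H)) :
    prodW (consG g l) = Coprod.inl g * prodW l := by
  classical
  cases l with
  | nil =>
    rw [consG_nil]
    split_ifs with h
    · subst h; simp [prodW]
    · simp [prodW]
  | cons a t =>
    cases a with
    | inl g' =>
      rw [consG_inl]
      split_ifs with h
      · rw [prodW_cons]
        have : Coprod.inl (N := H) g * Coprod.inl g' = 1 := by
          rw [← map_mul, h, map_one]
        simp [← mul_assoc, this]
      · simp only [prodW_cons, Sum.elim_inl]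
        rw [map_mul, mul_assoc]
    | inr x =>
      rw [consG_inr]
      split_ifs with h
      · subst h; simp
      · simp [prodW_cons, mul_assoc]

lemma prodW_consH (h : H) (l : List (G ⊕ H)) :
    prodW (consH h l) = Coprod.inr h * prodW l := by
  classical
  cases l with
  | nil =>
    rw [consH_nil]
    split_ifs with hh
    · subst hh; simp [prodW]
    · simp [prodW]
  | cons a t =>
    cases a with
    | inr x =>
      rw [consH_inr]
      split_ifs with hh
      · rw [prodW_cons]
        have : Coprod.inr (M := G) h * Coprod.inr x = 1 := by
          rw [← map_mul, hh, map_one]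
        simp [← mul_assoc, this]
      · simp only [prodW_cons, Sum.elim_inr]
        rw [map_mul, mul_assoc]
    | inl g =>
      rw [consH_inl]
      split_ifs with hh
      · subst hh; simp
      · simp [prodW_cons, mul_assoc]

lemma toW_one : (toW (1 : Coprod G H)) = ⟨[], red_nil⟩ := by
  rw [toW, map_one]
  rfl

lemma toW_inl_mul (g : G) (k : Coprod G H) :
    (toW (Coprod.inl g * k)).1 = consG g (toW k).1 := by
  rw [toW, toW, map_mul, Coprod.lift_apply_inl]
  rfl

lemma toW_inr_mul (h : H) (k : Coprod G H) :
    (toW (Coprod.inr h * k)).1 = consH h (toW k).1 := by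
  rw [toW, toW, map_mul, Coprod.lift_apply_inr]
  rfl

lemma prodW_toW (k : Coprod G H) : prodW (toW k).1 = k := by
  have main : ∀ k : Coprod G H, ∀ w : W G H,
      prodW ((Coprod.lift phiG phiH k) w).1 = k * prodW w.1 := by
    intro k
    induction k using Coprod.induction_on with
    | inl m =>
      intro w
      rw [Coprod.lift_apply_inl]
      exact prodW_consG m w.1
    | inr n =>
      intro w
      rw [Coprod.lift_apply_inr]
      exact prodW_consH n w.1
    | mul x y hx hy =>
      intro w
      rw [map_mul]
      have : (Coprod.lift phiG phiH x * Coprod.lift phiG phiH y) w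
          = Coprod.lift phiG phiH x (Coprod.lift phiG phiH y w) := rfl
      rw [this, hx, hy, mul_assoc]
  have := main k ⟨[], red_nil⟩
  rw [toW]
  rw [this, prodW_nil, mul_one]

lemma toW_prodW {l : List (G ⊕ H)} (hl : Red l) : toW (prodW l) = ⟨l, hl⟩ := by
  induction l with
  | nil => rw [prodW_nil]; exact toW_one
  | cons a t ih =>
    cases a with
    | inl g =>
      have hg : g ≠ 1 := hl.head_ne
      apply Subtype.ext
      rw [prodW_cons]
      simp only [Sum.elim_inl]
      rw [toW_inl_mul, congrArg Subtype.val (ih hl.tail)]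
      rw [consG_nlh hl.inl_cons_nlh, if_neg hg]
    | inr x =>
      have hx : x ≠ 1 := hl.head_ne
      apply Subtype.ext
      rw [prodW_cons]
      simp only [Sum.elim_inr]
      rw [toW_inr_mul, congrArg Subtype.val (ih hl.tail)]
      rw [consH_nrh hl.inr_cons_nrh, if_neg hx]

end Equiv

section Length

open Monoid

variable (SG : Set G) (SH : Set H)

/-- Total syllable length of a word. -/
noncomputable def WL (l : List (G ⊕ H)) : ℕ :=
  (l.map (Sum.elim (wordLength SG) (wordLength SH))).sum

lemma WL_nil : WL SG SH [] = 0 := rfl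

lemma WL_cons (a : G ⊕ H) (t : List (G ⊕ H)) :
    WL SG SH (a :: t) = Sum.elim (wordLength SG) (wordLength SH) a + WL SG SH t := by
  simp [WL]

/-- The generating set of the coproduct. -/
def U : Set (Coprod G H) := (Coprod.inl '' SG) ∪ (Coprod.inr '' SH)

variable {SG SH}
variable (hgG : Subgroup.closure SG = ⊤) (hsG : ∀ s ∈ SG, s⁻¹ ∈ SG)
  (hgH : Subgroup.closure SH = ⊤) (hsH : ∀ s ∈ SH, s⁻¹ ∈ SH)

section
include hgG hsG

lemma WL_consG_le (g : G) (l : List (G ⊕ H)) :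
    WL SG SH (consG g l) ≤ wordLength SG g + WL SG SH l := by
  classical
  cases l with
  | nil =>
    rw [consG_nil]
    split_ifs with h
    · simp [WL_nil]
    · simp [WL, WL_nil]
  | cons a t =>
    cases a with
    | inl g' =>
      rw [consG_inl]
      split_ifs with h
      · rw [WL_cons]
        simp only [Sum.elim_inl]
        omega
      · rw [WL_cons, WL_cons]
        simp only [Sum.elim_inl]
        have := wordLength_mul_le SG (exists_rep hgG hsG g) (exists_rep hgG hsG g')
        omega
    | inr x =>
      rw [consG_inr]
      split_ifs with h
      · omega
      · rw [WL_cons, WL_cons]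
        simp only [Sum.elim_inl]
        omega

end

section
include hgH hsH

lemma WL_consH_le (h : H) (l : List (G ⊕ H)) :
    WL SG SH (consH h l) ≤ wordLength SH h + WL SG SH l := by
  classical
  cases l with
  | nil =>
    rw [consH_nil]
    split_ifs with hh
    · simp [WL_nil]
    · simp [WL, WL_nil]
  | cons a t =>
    cases a with
    | inr x =>
      rw [consH_inr]
      split_ifs with hh
      · rw [WL_cons]
        simp only [Sum.elim_inr]
        omega
      · rw [WL_cons, WL_cons]
        simp only [Sum.elim_inr]
        have := wordLength_mul_le SH (exists_rep hgH hsH h) (exists_rep hgH hsH x)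
        omega
    | inl g =>
      rw [consH_inl]
      split_ifs with hh
      · omega
      · rw [WL_cons, WL_cons]
        simp only [Sum.elim_inr]
        omega

end

include hgG hsG hgH hsH

lemma exists_rep_list (l : List (G ⊕ H)) :
    ∃ L : List (Coprod G H), (∀ x ∈ L, x ∈ U SG SH) ∧ L.length = WL SG SH l ∧
      L.prod = prodW l := by
  induction l with
  | nil => exact ⟨[], by simp, by simp [WL_nil], by simp [prodW_nil]⟩
  | cons a t ih =>
    obtain ⟨L, hL, hlen, hprod⟩ := ih
    cases a with
    | inl g =>
      obtain ⟨m, hm, hmlen, hmprod⟩ := wordLength_spec SG g (exists_rep hgG hsG g)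
      refine ⟨m.map Coprod.inl ++ L, ?_, ?_, ?_⟩
      · intro x hx
        rcases List.mem_append.1 hx with hx | hx
        · obtain ⟨y, hy, rfl⟩ := List.mem_map.1 hx
          exact Or.inl ⟨y, hm y hy, rfl⟩
        · exact hL x hx
      · simp [hlen, hmlen, WL_cons]
      · rw [List.prod_append, hprod, prodW_cons]
        simp only [Sum.elim_inl]
        congr 1
        rw [← hmprod, ← map_list_prod]
    | inr h =>
      obtain ⟨m, hm, hmlen, hmprod⟩ := wordLength_spec SH h (exists_rep hgH hsH h)
      refine ⟨m.map Coprod.inr ++ L, ?_, ?_, ?_⟩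
      · intro x hx
        rcases List.mem_append.1 hx with hx | hx
        · obtain ⟨y, hy, rfl⟩ := List.mem_map.1 hx
          exact Or.inr ⟨y, hm y hy, rfl⟩
        · exact hL x hx
      · simp [hlen, hmlen, WL_cons]
      · rw [List.prod_append, hprod, prodW_cons]
        simp only [Sum.elim_inr]
        congr 1
        rw [← hmprod, ← map_list_prod]

lemma wordLength_U_eq (k : Coprod G H) :
    wordLength (U SG SH) k = WL SG SH (toW k).1 := by
  apply le_antisymm
  · obtain ⟨L, hL, hlen, hprod⟩ := exists_rep_list hgG hsG hgH hsH (toW k).1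
    rw [prodW_toW] at hprod
    rw [← hlen]
    exact wordLength_le _ hL hprod
  · have aux : ∀ L : List (Coprod G H), (∀ x ∈ L, x ∈ U SG SH) →
        WL SG SH (toW L.prod).1 ≤ L.length := by
      intro L
      induction L with
      | nil => intro _; rw [List.prod_nil, toW_one]; simp [WL_nil]
      | cons u L' ih =>
        intro hu
        rw [List.prod_cons]
        rcases hu u (List.mem_cons_self) with ⟨s, hs, rfl⟩ | ⟨s, hs, rfl⟩
        · rw [toW_inl_mul]
          have h1 : wordLength SG s ≤ 1 :=
            wordLength_le SG (l := [s]) (by simpa using hs) (by simp)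
          have h2 := ih (fun x hx => hu x (List.mem_cons_of_mem _ hx))
          have h3 := WL_consG_le (SH := SH) hgG hsG s (toW L'.prod).1
          rw [List.length_cons]
          omega
        · rw [toW_inr_mul]
          have h1 : wordLength SH s ≤ 1 :=
            wordLength_le SH (l := [s]) (by simpa using hs) (by simp)
          have h2 := ih (fun x hx => hu x (List.mem_cons_of_mem _ hx))
          have h3 := WL_consH_le (SG := SG) hgH hsH s (toW L'.prod).1
          rw [List.length_cons]
          omega
    obtain ⟨L, hL, hprod⟩ : ∃ L : List (Coprod G H), (∀ x ∈ L, x ∈ U SG SH) ∧ L.prod = k := by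
      obtain ⟨L, hL, _, hprod⟩ := exists_rep_list hgG hsG hgH hsH (toW k).1
      rw [prodW_toW] at hprod
      exact ⟨L, hL, hprod⟩
    obtain ⟨M, hM, hMlen, hMprod⟩ := wordLength_spec _ k ⟨L, hL, hprod⟩
    calc WL SG SH (toW k).1 = WL SG SH (toW M.prod).1 := by rw [hMprod]
      _ ≤ M.length := aux M hM
      _ = wordLength (U SG SH) k := hMlen

end Length

end Two

section Card

lemma finite_lists {α : Type*} {T : Set α} (hT : T.Finite) (n : ℕ) :
    {l : List α | (∀ x ∈ l, x ∈ T) ∧ l.length ≤ n}.Finite := by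
  have : Finite ↥T := hT
  apply ((List.finite_length_le ↥T n).image (List.map (Subtype.val))).subset
  rintro l ⟨hl, hlen⟩
  refine ⟨l.attach.map (fun x => ⟨x.1, hl x.1 x.2⟩), ?_, ?_⟩
  · simpa using hlen
  · simp [List.map_map]

lemma length_le_sum : ∀ L : List ℕ, (∀ x ∈ L, 1 ≤ x) → L.length ≤ L.sum := by
  intro L
  induction L with
  | nil => simp
  | cons a t ih =>
    intro h
    have ha := h a (List.mem_cons_self)
    have := ih (fun x hx => h x (List.mem_cons_of_mem _ hx))
    simp only [List.length_cons, List.sum_cons]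
    omega

lemma ncard_prod {α β : Type*} (s : Set α) (t : Set β) :
    (s ×ˢ t).ncard = s.ncard * t.ncard := by
  rw [← Nat.card_coe_set_eq, ← Nat.card_coe_set_eq, ← Nat.card_coe_set_eq,
    ← Nat.card_prod]
  exact Nat.card_congr (Equiv.Set.prod s t)

lemma ncard_biUnion {ι α : Type*} (s : Finset ι) (f : ι → Set α)
    (hfin : ∀ i ∈ s, (f i).Finite)
    (hdisj : (s : Set ι).PairwiseDisjoint f) :
    (⋃ i ∈ s, f i).ncard = ∑ i ∈ s, (f i).ncard := by
  classical
  induction s using Finset.induction_on with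
  | empty => simp
  | @insert a s ha ih =>
    rw [Finset.set_biUnion_insert, Finset.sum_insert ha]
    rw [Set.ncard_union_eq ?disj ?f1 ?f2]
    · rw [ih (fun i hi => hfin i (Finset.mem_insert_of_mem hi))
        (hdisj.subset (by simp [Set.subset_def]; exact fun x hx => Or.inr hx))]
    case disj =>
      rw [Set.disjoint_iUnion_right]
      intro i
      rw [Set.disjoint_iUnion_right]
      intro hi
      exact hdisj (Finset.mem_coe.2 (Finset.mem_insert_self a s))
        (Finset.mem_coe.2 (Finset.mem_insert_of_mem hi)) (fun h => ha (h ▸ hi))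
    case f1 => exact hfin a (Finset.mem_insert_self a s)
    case f2 =>
      apply Set.Finite.biUnion (Finset.finite_toSet s)
      intro i hi
      exact hfin i (Finset.mem_insert_of_mem hi)

variable {G : Type*} [Group G] {S : Set G}
  (hS : S.Finite) (hg : Subgroup.closure S = ⊤) (hs : ∀ s ∈ S, s⁻¹ ∈ S)

include hS hg hs

lemma finite_ball (n : ℕ) : {g : G | wordLength S g ≤ n}.Finite := by
  apply ((finite_lists hS n).image List.prod).subset
  intro g hgmem
  obtain ⟨l, hl, hlen, hprod⟩ := wordLength_spec S g (exists_rep hg hs g)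
  exact ⟨l, ⟨hl, by rw [hlen]; exact hgmem⟩, hprod⟩

lemma finite_sphere (n : ℕ) : {g : G | wordLength S g = n}.Finite :=
  (finite_ball hS hg hs n).subset (fun g hgm => le_of_eq hgm)

end Card

section Count

open Monoid PowerSeries

variable {G H : Type*} [Group G] [Group H]

variable (SG : Set G) (SH : Set H)

/-- Sphere of radius `n` in the free product (as reduced words). -/
def sphK (n : ℕ) : Set (List (G ⊕ H)) := {l | Red l ∧ WL SG SH l = n}

/-- Reduced words of length `n` starting with a `G`-syllable. -/
def sphG (n : ℕ) : Set (List (G ⊕ H)) := {l | Red l ∧ WL SG SH l = n ∧ ¬ NLH l}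

/-- Reduced words of length `n` starting with an `H`-syllable. -/
def sphH (n : ℕ) : Set (List (G ⊕ H)) := {l | Red l ∧ WL SG SH l = n ∧ ¬ NRH l}

/-- Reduced words of length `n` not starting with a `G`-syllable. -/
def sNL (n : ℕ) : Set (List (G ⊕ H)) := {l | Red l ∧ WL SG SH l = n ∧ NLH l}

/-- Reduced words of length `n` not starting with an `H`-syllable. -/
def sNR (n : ℕ) : Set (List (G ⊕ H)) := {l | Red l ∧ WL SG SH l = n ∧ NRH l}

/-- Nontrivial elements of `G` of length `n`. -/
def sG1 (n : ℕ) : Set G := {g | g ≠ 1 ∧ wordLength SG g = n}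

/-- Nontrivial elements of `H` of length `n`. -/
def sH1 (n : ℕ) : Set H := {h | h ≠ 1 ∧ wordLength SH h = n}

variable {SG SH}
variable (hSGf : SG.Finite) (hSHf : SH.Finite)
  (hgG : Subgroup.closure SG = ⊤) (hsG : ∀ s ∈ SG, s⁻¹ ∈ SG)
  (hgH : Subgroup.closure SH = ⊤) (hsH : ∀ s ∈ SH, s⁻¹ ∈ SH)

include hSGf hSHf hgG hsG hgH hsH

lemma finite_sphK (n : ℕ) : (sphK SG SH n).Finite := by
  classical
  set T : Set (G ⊕ H) :=
    (Sum.inl '' {g : G | wordLength SG g ≤ n}) ∪ (Sum.inr '' {h : H | wordLength SH h ≤ n})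
    with hT
  have hTfin : T.Finite :=
    ((finite_ball hSGf hgG hsG n).image _).union ((finite_ball hSHf hgH hsH n).image _)
  apply (finite_lists hTfin n).subset
  rintro l ⟨hred, hwl⟩
  constructor
  · intro x hx
    have hmem : Sum.elim (wordLength SG) (wordLength SH) x
        ∈ l.map (Sum.elim (wordLength SG) (wordLength SH)) := List.mem_map_of_mem hx
    have hle : Sum.elim (wordLength SG) (wordLength SH) x ≤ n := by
      rw [← hwl]
      exact List.single_le_sum (fun y _ => Nat.zero_le y) _ hmem
    cases x with
    | inl g => exact Or.inl ⟨g, by simpa using hle, rfl⟩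
    | inr h => exact Or.inr ⟨h, by simpa using hle, rfl⟩
  · have h1 : ∀ y ∈ l.map (Sum.elim (wordLength SG) (wordLength SH)), 1 ≤ y := by
      intro y hy
      obtain ⟨x, hx, rfl⟩ := List.mem_map.1 hy
      have hne := hred.2 x hx
      cases x with
      | inl g =>
        have : g ≠ 1 := hne
        simpa using Nat.one_le_iff_ne_zero.2 (fun h0 => this ((wordLength_eq_zero_iff hgG hsG).1 h0))
      | inr h =>
        have : h ≠ 1 := hne
        simpa using Nat.one_le_iff_ne_zero.2 (fun h0 => this ((wordLength_eq_zero_iff hgH hsH).1 h0))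
    calc l.length = (l.map (Sum.elim (wordLength SG) (wordLength SH))).length :=
          (List.length_map _).symm
      _ ≤ _ := length_le_sum _ h1
      _ = n := hwl

lemma card_c1 (n : ℕ) :
    Nat.card {k : Coprod G H // wordLength (U SG SH) k = n} = (sphK SG SH n).ncard := by
  rw [← Nat.card_coe_set_eq]
  apply Nat.card_congr
  refine ⟨fun k => ⟨(toW k.1).1, (toW k.1).2, by
      rw [← wordLength_U_eq hgG hsG hgH hsH]; exact k.2⟩,
    fun l => ⟨prodW l.1, by
      rw [wordLength_U_eq hgG hsG hgH hsH, toW_prodW l.2.1]; exact l.2.2⟩, ?_, ?_⟩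
  · intro k
    exact Subtype.ext (prodW_toW k.1)
  · intro l
    refine Subtype.ext ?_
    show (toW (prodW l.1)).1 = l.1
    rw [toW_prodW l.2.1]

lemma card_c2 (n : ℕ) :
    (sphK SG SH n).ncard = (sphG SG SH n).ncard + (sphH SG SH n).ncard
      + (if n = 0 then 1 else 0) := by
  classical
  have hfin := finite_sphK hSGf hSHf hgG hsG hgH hsH n
  have hsub1 : sphG SG SH n ⊆ sphK SG SH n := fun l hl => ⟨hl.1, hl.2.1⟩
  have hsub2 : sphH SG SH n ⊆ sphK SG SH n := fun l hl => ⟨hl.1, hl.2.1⟩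
  have heq : sphK SG SH n = (sphG SG SH n ∪ sphH SG SH n)
      ∪ (if n = 0 then {([] : List (G ⊕ H))} else ∅) := by
    ext l
    cases l with
    | nil =>
      by_cases h0 : n = 0 <;>
        simp [sphK, sphG, sphH, NLH, NRH, red_nil, WL_nil, h0, eq_comm]
    | cons a t =>
      cases a with
      | inl g =>
        by_cases h0 : n = 0 <;>
          simp [sphK, sphG, sphH, NLH, NRH, h0, and_assoc]
      | inr x =>
        by_cases h0 : n = 0 <;>
          simp [sphK, sphG, sphH, NLH, NRH, h0, and_assoc]
  have hdisj1 : Disjoint (sphG SG SH n) (sphH SG SH n) := by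
    rw [Set.disjoint_left]
    rintro l ⟨_, _, hnl⟩ ⟨_, _, hnr⟩
    cases l with
    | nil => exact hnl trivial
    | cons a t => cases a with
      | inl => exact hnr trivial
      | inr => exact hnl trivial
  have hdisj2 : Disjoint (sphG SG SH n ∪ sphH SG SH n)
      (if n = 0 then {([] : List (G ⊕ H))} else ∅) := by
    split_ifs with h0
    · rw [Set.disjoint_singleton_right]
      rintro (⟨_, _, hnl⟩ | ⟨_, _, hnr⟩)
      · exact hnl trivial
      · exact hnr trivial
    · exact Set.disjoint_empty _
  have hfinG : (sphG SG SH n).Finite := hfin.subset hsub1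
  have hfinH : (sphH SG SH n).Finite := hfin.subset hsub2
  have hfinE : (if n = 0 then {([] : List (G ⊕ H))} else ∅ : Set (List (G ⊕ H))).Finite := by
    split_ifs
    · exact Set.finite_singleton _
    · exact Set.finite_empty
  rw [heq, Set.ncard_union_eq hdisj2 (hfinG.union hfinH) hfinE,
    Set.ncard_union_eq hdisj1 hfinG hfinH]
  congr 1
  split_ifs
  · exact Set.ncard_singleton _
  · exact Set.ncard_empty _

lemma card_c3 (n : ℕ) :
    (sphG SG SH n).ncard
      = ∑ p ∈ Finset.HasAntidiagonal.antidiagonal n, (sG1 SG p.1).ncard * (sNL SG SH p.2).ncard := by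
  classical
  set F : ℕ × ℕ → Set (List (G ⊕ H)) :=
    fun p => (fun q : G × List (G ⊕ H) => (Sum.inl q.1 : G ⊕ H) :: q.2) ''
      ((sG1 SG p.1) ×ˢ (sNL SG SH p.2)) with hF
  have hFsub : ∀ p : ℕ × ℕ, p ∈ Finset.HasAntidiagonal.antidiagonal n → F p ⊆ sphG SG SH n := by
    rintro p hp l ⟨⟨g, t⟩, ⟨⟨hg1, hgl⟩, hredt, hwlt, hnlt⟩, rfl⟩
    refine ⟨red_inl_cons hg1 hredt hnlt, ?_, fun h => h⟩
    rw [WL_cons]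
    simp only [Sum.elim_inl]
    rw [hgl, hwlt]
    exact Finset.HasAntidiagonal.mem_antidiagonal.1 hp
  have heq : sphG SG SH n = ⋃ p ∈ Finset.HasAntidiagonal.antidiagonal n, F p := by
    ext l
    constructor
    · rintro ⟨hred, hwl, hnlh⟩
      cases l with
      | nil => exact absurd trivial hnlh
      | cons a t =>
        cases a with
        | inr x => exact absurd trivial hnlh
        | inl g =>
          refine Set.mem_iUnion₂.2 ⟨(wordLength SG g, WL SG SH t), ?_, ?_⟩
          · rw [Finset.HasAntidiagonal.mem_antidiagonal]
            rw [WL_cons] at hwl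
            simpa using hwl
          · exact ⟨(g, t), ⟨⟨hred.head_ne, rfl⟩, hred.tail, rfl, hred.inl_cons_nlh⟩, rfl⟩
    · rintro hl
      obtain ⟨p, hp, hlp⟩ := Set.mem_iUnion₂.1 hl
      exact hFsub p hp hlp
  have hdisj : ((Finset.HasAntidiagonal.antidiagonal n : Finset (ℕ × ℕ)) : Set (ℕ × ℕ)).PairwiseDisjoint F := by
    rintro p hp p' hp' hne
    rw [Function.onFun, Set.disjoint_left]
    rintro l ⟨⟨g, t⟩, ⟨⟨hg1, hgl⟩, _, hwlt, _⟩, rfl⟩ ⟨⟨g', t'⟩, ⟨⟨hg1', hgl'⟩, _, hwlt', _⟩, hl'⟩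
    apply hne
    obtain ⟨rfl, rfl⟩ : g' = g ∧ t' = t := by
      constructor
      · exact Sum.inl.inj (List.head_eq_of_cons_eq hl')
      · exact List.tail_eq_of_cons_eq hl'
    ext
    · rw [← hgl, ← hgl']
    · rw [← hwlt, ← hwlt']
  have hfin : ∀ p ∈ Finset.HasAntidiagonal.antidiagonal n, (F p).Finite :=
    fun p hp => ((finite_sphK hSGf hSHf hgG hsG hgH hsH n).subset
      (fun l hl => ⟨hl.1, hl.2.1⟩)).subset (hFsub p hp)
  rw [heq, ncard_biUnion _ _ hfin hdisj]
  apply Finset.sum_congr rfl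
  intro p _
  rw [hF]
  have hinj : Function.Injective (fun q : G × List (G ⊕ H) => (Sum.inl q.1 : G ⊕ H) :: q.2) := by
    rintro ⟨g, t⟩ ⟨g', t'⟩ h
    simp only [List.cons.injEq, Sum.inl.injEq] at h
    exact Prod.ext h.1 h.2
  rw [Set.ncard_image_of_injective _ hinj, ncard_prod]

lemma card_c3' (n : ℕ) :
    (sphH SG SH n).ncard
      = ∑ p ∈ Finset.HasAntidiagonal.antidiagonal n, (sH1 SH p.1).ncard * (sNR SG SH p.2).ncard := by
  classical
  set F : ℕ × ℕ → Set (List (G ⊕ H)) :=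
    fun p => (fun q : H × List (G ⊕ H) => (Sum.inr q.1 : G ⊕ H) :: q.2) ''
      ((sH1 SH p.1) ×ˢ (sNR SG SH p.2)) with hF
  have hFsub : ∀ p : ℕ × ℕ, p ∈ Finset.HasAntidiagonal.antidiagonal n → F p ⊆ sphH SG SH n := by
    rintro p hp l ⟨⟨h, t⟩, ⟨⟨hh1, hhl⟩, hredt, hwlt, hnrt⟩, rfl⟩
    refine ⟨red_inr_cons hh1 hredt hnrt, ?_, fun hc => hc⟩
    rw [WL_cons]
    simp only [Sum.elim_inr]
    rw [hhl, hwlt]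
    exact Finset.HasAntidiagonal.mem_antidiagonal.1 hp
  have heq : sphH SG SH n = ⋃ p ∈ Finset.HasAntidiagonal.antidiagonal n, F p := by
    ext l
    constructor
    · rintro ⟨hred, hwl, hnrh⟩
      cases l with
      | nil => exact absurd trivial hnrh
      | cons a t =>
        cases a with
        | inl g => exact absurd trivial hnrh
        | inr x =>
          refine Set.mem_iUnion₂.2 ⟨(wordLength SH x, WL SG SH t), ?_, ?_⟩
          · rw [Finset.HasAntidiagonal.mem_antidiagonal]
            rw [WL_cons] at hwl
            simpa using hwl
          · exact ⟨(x, t), ⟨⟨hred.head_ne, rfl⟩, hred.tail, rfl, hred.inr_cons_nrh⟩, rfl⟩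
    · rintro hl
      obtain ⟨p, hp, hlp⟩ := Set.mem_iUnion₂.1 hl
      exact hFsub p hp hlp
  have hdisj : ((Finset.HasAntidiagonal.antidiagonal n : Finset (ℕ × ℕ)) : Set (ℕ × ℕ)).PairwiseDisjoint F := by
    rintro p hp p' hp' hne
    rw [Function.onFun, Set.disjoint_left]
    rintro l ⟨⟨h, t⟩, ⟨⟨hh1, hhl⟩, _, hwlt, _⟩, rfl⟩ ⟨⟨h', t'⟩, ⟨⟨hh1', hhl'⟩, _, hwlt', _⟩, hl'⟩
    apply hne
    obtain ⟨rfl, rfl⟩ : h' = h ∧ t' = t := by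
      constructor
      · exact Sum.inr.inj (List.head_eq_of_cons_eq hl')
      · exact List.tail_eq_of_cons_eq hl'
    ext
    · rw [← hhl, ← hhl']
    · rw [← hwlt, ← hwlt']
  have hfin : ∀ p ∈ Finset.HasAntidiagonal.antidiagonal n, (F p).Finite :=
    fun p hp => ((finite_sphK hSGf hSHf hgG hsG hgH hsH n).subset
      (fun l hl => ⟨hl.1, hl.2.1⟩)).subset (hFsub p hp)
  rw [heq, ncard_biUnion _ _ hfin hdisj]
  apply Finset.sum_congr rfl
  intro p _
  rw [hF]
  have hinj : Function.Injective (fun q : H × List (G ⊕ H) => (Sum.inr q.1 : G ⊕ H) :: q.2) := by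
    rintro ⟨h, t⟩ ⟨h', t'⟩ hq
    simp only [List.cons.injEq, Sum.inr.injEq] at hq
    exact Prod.ext hq.1 hq.2
  rw [Set.ncard_image_of_injective _ hinj, ncard_prod]

lemma card_c4 (n : ℕ) :
    (sNL SG SH n).ncard = (sphH SG SH n).ncard + (if n = 0 then 1 else 0) := by
  classical
  have hfin := finite_sphK hSGf hSHf hgG hsG hgH hsH n
  have heq : sNL SG SH n = sphH SG SH n ∪ (if n = 0 then {([] : List (G ⊕ H))} else ∅) := by
    ext l
    cases l with
    | nil =>
      by_cases h0 : n = 0 <;>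
        simp [sNL, sphH, NLH, NRH, red_nil, WL_nil, h0, eq_comm]
    | cons a t =>
      cases a with
      | inl g =>
        by_cases h0 : n = 0 <;> simp [sNL, sphH, NLH, NRH, h0]
      | inr x =>
        by_cases h0 : n = 0 <;> simp [sNL, sphH, NLH, NRH, h0]
  have hdisj : Disjoint (sphH SG SH n) (if n = 0 then {([] : List (G ⊕ H))} else ∅) := by
    split_ifs with h0
    · rw [Set.disjoint_singleton_right]
      rintro ⟨_, _, hnr⟩
      exact hnr trivial
    · exact Set.disjoint_empty _
  have hfinH : (sphH SG SH n).Finite := hfin.subset (fun l hl => ⟨hl.1, hl.2.1⟩)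
  have hfinE : (if n = 0 then {([] : List (G ⊕ H))} else ∅ : Set (List (G ⊕ H))).Finite := by
    split_ifs
    · exact Set.finite_singleton _
    · exact Set.finite_empty
  rw [heq, Set.ncard_union_eq hdisj hfinH hfinE]
  congr 1
  split_ifs
  · exact Set.ncard_singleton _
  · exact Set.ncard_empty _

lemma card_c4' (n : ℕ) :
    (sNR SG SH n).ncard = (sphG SG SH n).ncard + (if n = 0 then 1 else 0) := by
  classical
  have hfin := finite_sphK hSGf hSHf hgG hsG hgH hsH n
  have heq : sNR SG SH n = sphG SG SH n ∪ (if n = 0 then {([] : List (G ⊕ H))} else ∅) := by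
    ext l
    cases l with
    | nil =>
      by_cases h0 : n = 0 <;>
        simp [sNR, sphG, NLH, NRH, red_nil, WL_nil, h0, eq_comm]
    | cons a t =>
      cases a with
      | inl g =>
        by_cases h0 : n = 0 <;> simp [sNR, sphG, NLH, NRH, h0]
      | inr x =>
        by_cases h0 : n = 0 <;> simp [sNR, sphG, NLH, NRH, h0]
  have hdisj : Disjoint (sphG SG SH n) (if n = 0 then {([] : List (G ⊕ H))} else ∅) := by
    split_ifs with h0
    · rw [Set.disjoint_singleton_right]
      rintro ⟨_, _, hnl⟩
      exact hnl trivial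
    · exact Set.disjoint_empty _
  have hfinG : (sphG SG SH n).Finite := hfin.subset (fun l hl => ⟨hl.1, hl.2.1⟩)
  have hfinE : (if n = 0 then {([] : List (G ⊕ H))} else ∅ : Set (List (G ⊕ H))).Finite := by
    split_ifs
    · exact Set.finite_singleton _
    · exact Set.finite_empty
  rw [heq, Set.ncard_union_eq hdisj hfinG hfinE]
  congr 1
  split_ifs
  · exact Set.ncard_singleton _
  · exact Set.ncard_empty _

end Count

section CardG

variable {G : Type*} [Group G] {S : Set G}
  (hg : Subgroup.closure S = ⊤) (hs : ∀ s ∈ S, s⁻¹ ∈ S)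

include hg hs

lemma card_g1 (n : ℕ) :
    Nat.card {g : G // wordLength S g = n}
      = (sG1 S n).ncard + (if n = 0 then 1 else 0) := by
  classical
  have hcoe : Nat.card {g : G // wordLength S g = n}
      = ({g : G | wordLength S g = n}).ncard := Nat.card_coe_set_eq _
  rw [hcoe]
  rcases Nat.eq_zero_or_pos n with rfl | hn
  · have h1 : {g : G | wordLength S g = 0} = {(1 : G)} := by
      ext g
      simp [wordLength_eq_zero_iff hg hs]
    have h2 : sG1 S 0 = ∅ := by
      ext g
      simp only [sG1, Set.mem_setOf_eq, Set.mem_empty_iff_false, iff_false, not_and]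
      intro hne
      exact fun h0 => hne ((wordLength_eq_zero_iff hg hs).1 h0)
    rw [h1, h2]
    simp
  · have h1 : {g : G | wordLength S g = n} = sG1 S n := by
      ext g
      simp only [Set.mem_setOf_eq, sG1]
      constructor
      · intro hwl
        refine ⟨fun h1 => ?_, hwl⟩
        subst h1
        rw [wordLength_one] at hwl
        omega
      · exact fun h => h.2
    rw [h1, if_neg (by omega)]
    simp

end CardG

end FPG

open FPG Monoid PowerSeries in
/-- The growth series of a free product `G * H`, with respect to the union of finite
symmetric generating sets of the factors, satisfies
`F_{G*H} (1 - (F_G - 1)(F_H - 1)) = F_G F_H` as formal power series, i.e.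
`F_{G*H} = F_G F_H / (1 - (F_G - 1)(F_H - 1))`. -/
theorem stmt_14 {G H : Type*} [Group G] [Group H]
    (SG : Finset G) (SH : Finset H)
    (hgenG : Subgroup.closure (SG : Set G) = ⊤) (hsymG : ∀ s ∈ SG, s⁻¹ ∈ SG)
    (hgenH : Subgroup.closure (SH : Set H) = ⊤) (hsymH : ∀ s ∈ SH, s⁻¹ ∈ SH) :
    growthSeries ((⇑(Monoid.Coprod.inl : G →* Monoid.Coprod G H) '' (SG : Set G)) ∪
          (⇑(Monoid.Coprod.inr : H →* Monoid.Coprod G H) '' (SH : Set H)))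
        * (1 - (growthSeries (SG : Set G) - 1) * (growthSeries (SH : Set H) - 1))
      = growthSeries (SG : Set G) * growthSeries (SH : Set H) := by
  classical
  have hSGf : (SG : Set G).Finite := SG.finite_toSet
  have hSHf : (SH : Set H).Finite := SH.finite_toSet
  have hsG : ∀ s ∈ (SG : Set G), s⁻¹ ∈ (SG : Set G) := fun s hs => hsymG s hs
  have hsH : ∀ s ∈ (SH : Set H), s⁻¹ ∈ (SH : Set H) := fun s hs => hsymH s hs
  set SGs := (SG : Set G) with hSGs
  set SHs := (SH : Set H) with hSHs
  set P : PowerSeries ℝ := PowerSeries.mk fun n => ((sphG SGs SHs n).ncard : ℝ) with hPdef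
  set Q : PowerSeries ℝ := PowerSeries.mk fun n => ((sphH SGs SHs n).ncard : ℝ) with hQdef
  set A' : PowerSeries ℝ := PowerSeries.mk fun n => ((sG1 SGs n).ncard : ℝ) with hA'def
  set B' : PowerSeries ℝ := PowerSeries.mk fun n => ((sH1 SHs n).ncard : ℝ) with hB'def
  have hcoeffQ1 : ∀ j : ℕ, (PowerSeries.coeff j) (1 + Q) = ((sNL SGs SHs j).ncard : ℝ) := by
    intro j
    rw [map_add, PowerSeries.coeff_one, hQdef, coeff_mk,
      card_c4 hSGf hSHf hgenG hsG hgenH hsH j]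
    push_cast
    split_ifs <;> ring
  have hcoeffP1 : ∀ j : ℕ, (PowerSeries.coeff j) (1 + P) = ((sNR SGs SHs j).ncard : ℝ) := by
    intro j
    rw [map_add, PowerSeries.coeff_one, hPdef, coeff_mk,
      card_c4' hSGf hSHf hgenG hsG hgenH hsH j]
    push_cast
    split_ifs <;> ring
  -- the three structural identities
  have hA : growthSeries SGs = 1 + A' := by
    apply PowerSeries.ext
    intro n
    rw [growthSeries, coeff_mk, card_g1 hgenG hsG n, map_add, PowerSeries.coeff_one,
      hA'def, coeff_mk]
    push_cast
    split_ifs <;> ring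
  have hB : growthSeries SHs = 1 + B' := by
    apply PowerSeries.ext
    intro n
    rw [growthSeries, coeff_mk, card_g1 hgenH hsH n, map_add, PowerSeries.coeff_one,
      hB'def, coeff_mk]
    have hGH : sG1 SHs n = sH1 SHs n := rfl
    rw [hGH]
    push_cast
    split_ifs <;> ring
  have hC : growthSeries (U SGs SHs) = 1 + P + Q := by
    apply PowerSeries.ext
    intro n
    rw [growthSeries, coeff_mk, card_c1 hSGf hSHf hgenG hsG hgenH hsH n,
      card_c2 hSGf hSHf hgenG hsG hgenH hsH n,
      map_add, map_add, PowerSeries.coeff_one, hPdef, hQdef, coeff_mk, coeff_mk]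
    push_cast
    split_ifs <;> ring
  have hP : P = A' * (1 + Q) := by
    apply PowerSeries.ext
    intro n
    rw [hPdef, coeff_mk, card_c3 hSGf hSHf hgenG hsG hgenH hsH n, coeff_mul]
    push_cast
    apply Finset.sum_congr rfl
    intro p _
    rw [hcoeffQ1 p.2, hA'def, coeff_mk]
  have hQ : Q = B' * (1 + P) := by
    apply PowerSeries.ext
    intro n
    rw [hQdef, coeff_mk, card_c3' hSGf hSHf hgenG hsG hgenH hsH n, coeff_mul]
    push_cast
    apply Finset.sum_congr rfl
    intro p _
    rw [hcoeffP1 p.2, hB'def, coeff_mk]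
  -- assemble
  have hU : ((⇑(Monoid.Coprod.inl : G →* Monoid.Coprod G H) '' SGs) ∪
      (⇑(Monoid.Coprod.inr : H →* Monoid.Coprod G H) '' SHs)) = U SGs SHs := rfl
  rw [hU, hC]
  have hA' : A' = growthSeries SGs - 1 := by rw [hA]; ring
  have hB' : B' = growthSeries SHs - 1 := by rw [hB]; ring
  have hP' : P = (growthSeries SGs - 1) * (1 + Q) := by rw [hP, hA']
  have hQ' : Q = (growthSeries SHs - 1) * (1 + P) := by rw [hQ, hB']
  linear_combination (1 + (growthSeries SHs - 1)) * hP' + (1 + (growthSeries SGs - 1)) * hQ'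
    + (growthSeries SGs - 1) * (growthSeries SHs - 1) * (hP' * 0 + hQ' * 0)
end

section
/- Let $\Gamma = \FF_2 = \langle a, b\rangle$ be the free group of rank 2 with word metric, and let $v = \log 3$ be its growth rate. There exists a subsemigroup $\Lambda^+ \subseteq \FF_2$ such that $\liminf_n |B_n \cap \Lambda^+|/|B_n| = 0$ and $\limsup_n |B_n \cap \Lambda^+|/|B_n| > 0$. -/
open Filter

/-- The standard symmetric generating set `{a, a⁻¹, b, b⁻¹}` of the free group `F₂`. -/
def stdGens : Set (FreeGroup Bool) :=
  {FreeGroup.of true, (FreeGroup.of true)⁻¹, FreeGroup.of false, (FreeGroup.of false)⁻¹}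

open List

abbrev LL := Bool × Bool

def aL : LL := (true, true)

def binv (p : LL) : LL := (p.1, !p.2)

lemma binv_binv (p : LL) : binv (binv p) = p := by simp [binv]

def Ok (p q : LL) : Prop := q ≠ binv p

instance : DecidableRel Ok := fun p q => by unfold Ok; infer_instance

def RedW (l : List LL) : Prop := l.IsChain Ok

instance : DecidablePred RedW := fun l => by unfold RedW; infer_instance

lemma reduce_eq_self {l : List LL} (h : RedW l) : FreeGroup.reduce l = l := by
  induction l with
  | nil => rfl
  | cons x t ih =>
    have ht : RedW t := (List.isChain_cons.mp h).2
    rw [FreeGroup.reduce.cons, ih ht]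
    cases t with
    | nil => rfl
    | cons hd tl =>
      have hok : Ok x hd := (List.isChain_cons_cons.mp h).1
      have : ¬(x.1 = hd.1 ∧ x.2 = !hd.2) := by
        rintro ⟨h1, h2⟩
        exact hok (by simp [binv, ← h1, h2, Prod.ext_iff])
      simp [this]

lemma not_chain'_decomp : ∀ (M : List LL), ¬ RedW M →
    ∃ (L₂ L₃ : List LL) (x : Bool) (b : Bool), M = L₂ ++ (x, b) :: (x, !b) :: L₃ := by
  intro M
  induction M with
  | nil => intro h; exact absurd List.isChain_nil h
  | cons x t ih =>
    intro h
    cases t with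
    | nil => exact absurd (List.isChain_singleton x) h
    | cons y tl =>
      rw [RedW, List.isChain_cons_cons] at h
      by_cases hxy : Ok x y
      · have : ¬ RedW (y :: tl) := fun hc => h ⟨hxy, hc⟩
        obtain ⟨L₂, L₃, z, b, hd⟩ := ih this
        exact ⟨x :: L₂, L₃, z, b, by rw [List.cons_append, hd]⟩
      · rw [Ok, not_not] at hxy
        refine ⟨[], tl, x.1, x.2, ?_⟩
        simp only [List.nil_append]
        rw [hxy]; rfl

lemma redW_reduce (L : List LL) : RedW (FreeGroup.reduce L) := by
  by_contra h
  obtain ⟨L₂, L₃, x, b, hd⟩ := not_chain'_decomp _ h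
  exact FreeGroup.reduce.not hd

lemma redW_toWord (g : FreeGroup Bool) : RedW g.toWord := by
  rw [← FreeGroup.reduce_toWord]; exact redW_reduce _

lemma toWord_mk_red {l : List LL} (h : RedW l) : (FreeGroup.mk l).toWord = l := by
  rw [FreeGroup.toWord_mk, reduce_eq_self h]

lemma toWord_mul_eq {x y : FreeGroup Bool} (h : RedW (x.toWord ++ y.toWord)) :
    (x * y).toWord = x.toWord ++ y.toWord := by
  conv_lhs => rw [← FreeGroup.mk_toWord (x := x), ← FreeGroup.mk_toWord (x := y)]
  rw [FreeGroup.mul_mk, toWord_mk_red h]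

def genOf (p : LL) : FreeGroup Bool := cond p.2 (FreeGroup.of p.1) (FreeGroup.of p.1)⁻¹

lemma genOf_mem (p : LL) : genOf p ∈ stdGens := by
  rcases p with ⟨x, b⟩
  cases x <;> cases b <;> simp [genOf, stdGens]

lemma genOf_eq_mk (p : LL) : genOf p = FreeGroup.mk [p] := by
  rcases p with ⟨x, b⟩
  cases b
  · show (FreeGroup.of x)⁻¹ = _
    rw [FreeGroup.of, FreeGroup.inv_mk]
    rfl
  · rfl

lemma prod_map_genOf (l : List LL) : (l.map genOf).prod = FreeGroup.mk l := by
  induction l with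
  | nil =>
    show (1 : FreeGroup Bool) = FreeGroup.mk []
    rw [FreeGroup.one_eq_mk]
  | cons p t ih =>
    rw [List.map_cons, List.prod_cons, ih, genOf_eq_mk, FreeGroup.mul_mk]
    rfl

lemma norm_mem_gens {x : FreeGroup Bool} (h : x ∈ stdGens) : FreeGroup.norm x = 1 := by
  rcases h with h | h | h | h <;> subst h <;>
    simp [FreeGroup.norm_inv_eq, FreeGroup.norm_of]

lemma normProdLe (l : List (FreeGroup Bool)) (h : ∀ x ∈ l, x ∈ stdGens) :
    FreeGroup.norm l.prod ≤ l.length := by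
  induction l with
  | nil => simp [FreeGroup.norm_one]
  | cons x t ih =>
    rw [List.prod_cons, List.length_cons]
    calc FreeGroup.norm (x * t.prod) ≤ FreeGroup.norm x + FreeGroup.norm t.prod :=
          FreeGroup.norm_mul_le _ _
    _ ≤ 1 + t.length := by
        gcongr
        · exact le_of_eq (norm_mem_gens (h x (List.mem_cons_self)))
        · exact ih (fun y hy => h y (List.mem_cons_of_mem _ hy))
    _ = t.length + 1 := by ring

lemma wordLength_eq (g : FreeGroup Bool) : wordLength stdGens g = FreeGroup.norm g := by
  have hmem : FreeGroup.norm g ∈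
      {n | ∃ l : List (FreeGroup Bool), (∀ x ∈ l, x ∈ stdGens) ∧ l.length = n ∧ l.prod = g} := by
    refine ⟨g.toWord.map genOf, fun x hx => ?_, by rw [List.length_map]; rfl, by
      rw [prod_map_genOf, FreeGroup.mk_toWord]⟩
    obtain ⟨p, _, rfl⟩ := List.mem_map.mp hx
    exact genOf_mem p
  apply _root_.le_antisymm
  · exact Nat.sInf_le hmem
  · apply le_csInf ⟨_, hmem⟩
    rintro n ⟨l, hl, rfl, rfl⟩
    exact normProdLe l hl


def listsF (m : ℕ) : Finset (List LL) := (Finset.univ : Finset (Fin m → LL)).image List.ofFn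

lemma mem_listsF {m : ℕ} {l : List LL} : l ∈ listsF m ↔ l.length = m := by
  constructor
  · intro h; obtain ⟨f, _, rfl⟩ := Finset.mem_image.mp h; simp
  · intro h; subst h; exact Finset.mem_image.mpr ⟨l.get, Finset.mem_univ _, List.ofFn_get l⟩

def RF (m : ℕ) : Finset (List LL) := (listsF m).filter RedW

lemma mem_RF {m : ℕ} {l : List LL} : l ∈ RF m ↔ l.length = m ∧ RedW l := by
  simp [RF, Finset.mem_filter, mem_listsF, and_comm]

def headOk (c : LL) (l : List LL) : Prop := ∀ h ∈ l.head?, Ok c h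
instance (c : LL) : DecidablePred (headOk c) := fun l => by unfold headOk; infer_instance

lemma cardRedHead : ∀ (m : ℕ) (c : LL), ((RF m).filter (headOk c)).card ≤ 3 ^ m := by
  intro m
  induction m with
  | zero =>
    intro c
    have : (RF 0).filter (headOk c) ⊆ {[]} := by
      intro l hl
      have := (mem_RF.mp (Finset.mem_filter.mp hl).1).1
      simpa using List.eq_nil_of_length_eq_zero this
    simpa using Finset.card_le_card this
  | succ m ih =>
    intro c
    have hsub : (RF (m+1)).filter (headOk c) ⊆
        ((Finset.univ : Finset LL).erase (binv c)).biUnion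
          (fun h => ((RF m).filter (headOk h)).image (h :: ·)) := by
      intro l hl
      rw [Finset.mem_filter] at hl
      obtain ⟨hRF, hhd⟩ := hl
      rw [mem_RF] at hRF
      obtain ⟨hlen, hred⟩ := hRF
      cases l with
      | nil => simp at hlen
      | cons h t =>
        have hokh : Ok c h := hhd h rfl
        have hch := List.isChain_cons.mp hred
        refine Finset.mem_biUnion.mpr ⟨h, Finset.mem_erase.mpr ⟨hokh, Finset.mem_univ _⟩, ?_⟩
        refine Finset.mem_image.mpr ⟨t, Finset.mem_filter.mpr ⟨mem_RF.mpr ⟨by simpa using hlen, hch.2⟩, hch.1⟩, rfl⟩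
    calc ((RF (m+1)).filter (headOk c)).card ≤ _ := Finset.card_le_card hsub
      _ ≤ ∑ h ∈ (Finset.univ : Finset LL).erase (binv c),
            (((RF m).filter (headOk h)).image (h :: ·)).card := Finset.card_biUnion_le
      _ ≤ ∑ _h ∈ (Finset.univ : Finset LL).erase (binv c), 3 ^ m := by
          refine Finset.sum_le_sum fun h _ => ?_
          exact le_trans (Finset.card_image_le) (ih h)
      _ = 3 * 3 ^ m := by
          rw [Finset.sum_const, Finset.card_erase_of_mem (Finset.mem_univ _)]
          simp [Finset.card_univ]
      _ = 3 ^ (m+1) := by ring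

lemma cardRF0 : (RF 0).card = 1 := by
  have : RF 0 = {[]} := by
    apply Finset.ext; intro l
    simp only [mem_RF, Finset.mem_singleton]
    constructor
    · rintro ⟨h, _⟩; exact List.eq_nil_of_length_eq_zero h
    · rintro rfl; exact ⟨rfl, List.isChain_nil⟩
  rw [this]; rfl

lemma cardRFsucc (m : ℕ) : (RF (m+1)).card ≤ 4 * 3 ^ m := by
  have hsub : RF (m+1) ⊆
      (Finset.univ : Finset LL).biUnion
        (fun h => ((RF m).filter (headOk h)).image (h :: ·)) := by
    intro l hl
    rw [mem_RF] at hl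
    obtain ⟨hlen, hred⟩ := hl
    cases l with
    | nil => simp at hlen
    | cons h t =>
      have hch := List.isChain_cons.mp hred
      exact Finset.mem_biUnion.mpr ⟨h, Finset.mem_univ _,
        Finset.mem_image.mpr ⟨t, Finset.mem_filter.mpr
          ⟨mem_RF.mpr ⟨by simpa using hlen, hch.2⟩, hch.1⟩, rfl⟩⟩
  calc (RF (m+1)).card ≤ _ := Finset.card_le_card hsub
    _ ≤ ∑ h ∈ (Finset.univ : Finset LL),
          (((RF m).filter (headOk h)).image (h :: ·)).card := Finset.card_biUnion_le
    _ ≤ ∑ _h ∈ (Finset.univ : Finset LL), 3 ^ m := by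
        refine Finset.sum_le_sum fun h _ => ?_
        exact le_trans (Finset.card_image_le) (cardRedHead m h)
    _ = 4 * 3 ^ m := by simp [Finset.card_univ]

def others (p : LL) : List LL :=
  [(true, true), (true, false), (false, true), (false, false)].filter (· ≠ binv p)

lemma length_others (p : LL) : (others p).length = 3 := by
  rcases p with ⟨x, b⟩; cases x <;> cases b <;> rfl

lemma nodup_others (p : LL) : (others p).Nodup := by
  rcases p with ⟨x, b⟩; cases x <;> cases b <;> decide

lemma mem_others {p q : LL} (h : q ∈ others p) : q ≠ binv p := by
  have := List.of_mem_filter h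
  simpa using this

def oget (p : LL) (i : Fin 3) : LL := (others p).get ⟨i.val, by rw [length_others]; exact i.isLt⟩

lemma oget_ok (p : LL) (i : Fin 3) : Ok p (oget p i) := mem_others (List.get_mem _ _)

lemma oget_inj (p : LL) {i j : Fin 3} (h : oget p i = oget p j) : i = j := by
  have h2 := (List.Nodup.get_inj_iff (nodup_others p)).mp h
  rcases i with ⟨i, hi⟩; rcases j with ⟨j, hj⟩
  simpa [Fin.ext_iff] using h2

def wordOf : LL → List (Fin 3) → List LL
  | _, [] => []
  | prev, i :: t => let c := oget prev i; c :: wordOf c t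

lemma wordOf_length : ∀ (bits : List (Fin 3)) (p : LL), (wordOf p bits).length = bits.length := by
  intro bits
  induction bits with
  | nil => intro p; rfl
  | cons i t ih => intro p; simp [wordOf, ih]

lemma wordOf_chain : ∀ (bits : List (Fin 3)) (p : LL), List.Chain Ok p (wordOf p bits) := by
  intro bits
  induction bits with
  | nil => intro p; exact List.Chain.nil
  | cons i t ih => intro p; exact List.Chain.cons (oget_ok p i) (ih _)

lemma wordOf_inj : ∀ (b1 b2 : List (Fin 3)) (p : LL), wordOf p b1 = wordOf p b2 → b1 = b2 := by
  intro b1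
  induction b1 with
  | nil =>
    intro b2 p h
    cases b2 with
    | nil => rfl
    | cons j t => simp [wordOf] at h
  | cons i t ih =>
    intro b2 p h
    cases b2 with
    | nil => simp [wordOf] at h
    | cons j s =>
      simp only [wordOf, List.cons.injEq] at h
      obtain ⟨h1, h2⟩ := h
      have hij : i = j := oget_inj p h1
      subst hij
      rw [ih s _ h2]

lemma chain'_of_chain {p : LL} {w : List LL} (h : List.Chain Ok p w) : RedW (p :: w) := h

def pick2 (z : LL) (bit : Bool) : LL :=
  if z = (false, true) then (if bit then (false, false) else (true, false))
  else if z = (false, false) then (if bit then (false, true) else (true, false))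
  else (if bit then (false, false) else (false, true))

lemma pick2_ne_z (z : LL) (bit : Bool) : pick2 z bit ≠ z := by
  rcases z with ⟨x, b⟩; cases x <;> cases b <;> cases bit <;> decide

lemma pick2_ne_aL (z : LL) (bit : Bool) : pick2 z bit ≠ aL := by
  rcases z with ⟨x, b⟩; cases x <;> cases b <;> cases bit <;> decide

lemma pick2_inj (z : LL) {b1 b2 : Bool} (h : pick2 z b1 = pick2 z b2) : b1 = b2 := by
  rcases z with ⟨x, b⟩; revert h; cases x <;> cases b <;> cases b1 <;> cases b2 <;> decide

def noAw : LL → List Bool → List LL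
  | _, [] => []
  | f, bit :: t => let c := pick2 f bit; c :: noAw (binv c) t

lemma noAw_length : ∀ (bits : List Bool) (f : LL), (noAw f bits).length = bits.length := by
  intro bits
  induction bits with
  | nil => intro f; rfl
  | cons b t ih => intro f; simp [noAw, ih]

lemma noAw_props : ∀ (bits : List Bool) (f : LL),
    (∀ h ∈ (noAw f bits).head?, h ≠ f) ∧ RedW (noAw f bits) ∧ aL ∉ noAw f bits := by
  intro bits
  induction bits with
  | nil => intro f; exact ⟨by simp [noAw], List.isChain_nil, by simp [noAw]⟩
  | cons b t ih =>
    intro f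
    obtain ⟨hh, hc, ha⟩ := ih (binv (pick2 f b))
    refine ⟨?_, ?_, ?_⟩
    · intro h hmem
      simp only [noAw, List.head?_cons, Option.mem_some_iff] at hmem
      rw [← hmem]
      exact pick2_ne_z f b
    · refine List.isChain_cons.mpr ⟨?_, hc⟩
      intro y hy
      have := hh y hy
      simpa [Ok] using this
    · simp only [noAw, List.mem_cons]
      rintro (h | h)
      · exact pick2_ne_aL f b h.symm
      · exact ha h

lemma noAw_inj : ∀ (b1 b2 : List Bool) (f : LL), noAw f b1 = noAw f b2 → b1 = b2 := by
  intro b1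
  induction b1 with
  | nil =>
    intro b2 f h
    cases b2 with
    | nil => rfl
    | cons j t => simp [noAw] at h
  | cons i t ih =>
    intro b2 f h
    cases b2 with
    | nil => simp [noAw] at h
    | cons j s =>
      simp only [noAw, List.cons.injEq] at h
      obtain ⟨h1, h2⟩ := h
      have hij : i = j := pick2_inj f h1
      subst hij
      rw [ih s _ h2]

lemma cardRF_lower (m : ℕ) : 3 ^ m ≤ (RF (m + 1)).card := by
  have h := Finset.card_le_card_of_injOn
    (f := fun bits : Fin m → Fin 3 => aL :: wordOf aL (List.ofFn bits))
    (s := (Finset.univ : Finset (Fin m → Fin 3))) (t := RF (m + 1))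
    (by
      intro bits _
      refine mem_RF.mpr ⟨?_, ?_⟩
      · simp [wordOf_length]
      · exact chain'_of_chain (wordOf_chain _ _))
    (by
      intro b1 _ b2 _ h
      simp only [List.cons.injEq] at h
      exact List.ofFn_injective (wordOf_inj _ _ _ h.2))
  simpa using h

def winP (N : ℕ) (l : List LL) : Prop := ∀ p, p + N ≤ l.length → aL ∈ (l.drop p).take N

instance (N : ℕ) : DecidablePred (winP N) := fun l => by
  refine decidable_of_iff (∀ p < l.length + 1, p + N ≤ l.length → aL ∈ (l.drop p).take N) ?_
  constructor
  · intro h p hp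
    exact h p (by omega) hp
  · intro h p _ hp
    exact h p hp

def CF (c : LL) (N m : ℕ) : Finset (List LL) :=
  (RF m).filter (fun l => winP N l ∧ headOk c l)

def VF (c : LL) (N : ℕ) : Finset (List LL) :=
  (RF N).filter (fun l => headOk c l ∧ aL ∈ l)

def NFs (c : LL) (N : ℕ) : Finset (List LL) :=
  (RF N).filter (fun l => headOk c l ∧ aL ∉ l)

lemma cardNF_lower (c : LL) (N : ℕ) : 2 ^ N ≤ (NFs c N).card := by
  have h := Finset.card_le_card_of_injOn
    (f := fun bits : Fin N → Bool => noAw (binv c) (List.ofFn bits))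
    (s := (Finset.univ : Finset (Fin N → Bool))) (t := NFs c N)
    (by
      intro bits _
      obtain ⟨hh, hc, ha⟩ := noAw_props (List.ofFn bits) (binv c)
      refine Finset.mem_filter.mpr ⟨mem_RF.mpr ⟨by simp [noAw_length], hc⟩, ?_, ha⟩
      intro y hy
      exact hh y hy)
    (by
      intro b1 _ b2 _ h
      exact List.ofFn_injective (noAw_inj _ _ _ h))
  simpa using h

lemma cardVF (c : LL) (N : ℕ) : (VF c N).card ≤ 3 ^ N - 2 ^ N := by
  have hsplit := Finset.card_filter_add_card_filter_not
    (s := (RF N).filter (headOk c)) (p := fun l => aL ∈ l)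
  have h1 : ((RF N).filter (headOk c)).filter (fun l => aL ∈ l) = VF c N := by
    rw [VF, Finset.filter_filter]
  have h2 : ((RF N).filter (headOk c)).filter (fun l => ¬ aL ∈ l) = NFs c N := by
    rw [NFs, Finset.filter_filter]
  rw [h1, h2] at hsplit
  have h3 := cardRedHead N c
  have h4 := cardNF_lower c N
  omega

lemma cfBound (N : ℕ) (hN : 1 ≤ N) :
    ∀ m c, (CF c N m).card ≤ (3 ^ N - 2 ^ N) ^ (m / N) * 3 ^ (m % N) := by
  intro m
  induction m using Nat.strong_induction_on with
  | _ m ih =>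
    intro c
    by_cases hm : m < N
    · rw [Nat.div_eq_of_lt hm, Nat.mod_eq_of_lt hm, pow_zero, one_mul]
      refine le_trans (Finset.card_le_card ?_) (cardRedHead m c)
      intro l hl
      rw [CF, Finset.mem_filter] at hl
      exact Finset.mem_filter.mpr ⟨hl.1, hl.2.2⟩
    · push_neg at hm
      have hsub : CF c N m ⊆ (VF c N).biUnion
          (fun v => (CF (v.getLastD aL) N (m - N)).image (v ++ ·)) := by
        intro l hl
        rw [CF, Finset.mem_filter, mem_RF] at hl
        obtain ⟨⟨hlen, hred⟩, hwin, hhead⟩ := hl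
        set v := l.take N with hv
        set u := l.drop N with hu
        have hvu : v ++ u = l := List.take_append_drop N l
        have hlenv : v.length = N := by rw [hv, List.length_take]; omega
        have hlenu : u.length = m - N := by rw [hu, List.length_drop]; omega
        have hred' : RedW (v ++ u) := by rw [hvu]; exact hred
        rw [RedW, List.isChain_append] at hred'
        obtain ⟨hredv, hredu, hjunc⟩ := hred'
        have hvne : v ≠ [] := by
          intro h; rw [h] at hlenv; simp at hlenv; omega
        have hheadv : v.head? = l.head? := by
          cases l with
          | nil => simp at hlen; omega
          | cons x t =>
            rw [hv]
            cases N with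
            | zero => omega
            | succ k => simp [List.take_succ_cons]
        have hvVF : v ∈ VF c N := by
          refine Finset.mem_filter.mpr ⟨mem_RF.mpr ⟨hlenv, hredv⟩, ?_, ?_⟩
          · intro h hh
            exact hhead h (by rw [← hheadv]; exact hh)
          · have := hwin 0 (by omega)
            simpa [hv] using this
        have hw : v.getLast? = some (v.getLastD aL) := by
          rw [List.getLastD_eq_getLast?]
          obtain ⟨w, hw⟩ := Option.isSome_iff_exists.mp (List.getLast?_isSome.mpr hvne)
          rw [hw]; rfl
        have huCF : u ∈ CF (v.getLastD aL) N (m - N) := by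
          refine Finset.mem_filter.mpr ⟨mem_RF.mpr ⟨hlenu, hredu⟩, ?_, ?_⟩
          · intro p hp
            have h2 : (u.drop p).take N = (l.drop (N + p)).take N := by
              rw [hu, List.drop_drop, Nat.add_comm]
            rw [h2]
            exact hwin (N + p) (by omega)
          · intro y hy
            exact hjunc _ (by rw [hw]; rfl) y hy
        exact Finset.mem_biUnion.mpr ⟨v, hvVF,
          Finset.mem_image.mpr ⟨u, huCF, hvu⟩⟩
      have hb : (3 ^ N - 2 ^ N) ^ ((m - N) / N + 1) * 3 ^ ((m - N) % N)
          = (3 ^ N - 2 ^ N) ^ (m / N) * 3 ^ (m % N) := by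
        rw [← Nat.div_eq_sub_div (by omega) hm, ← Nat.mod_eq_sub_mod hm]
      calc (CF c N m).card ≤ _ := Finset.card_le_card hsub
        _ ≤ ∑ v ∈ VF c N, ((CF (v.getLastD aL) N (m - N)).image (v ++ ·)).card :=
            Finset.card_biUnion_le
        _ ≤ ∑ _v ∈ VF c N, (3 ^ N - 2 ^ N) ^ ((m - N) / N) * 3 ^ ((m - N) % N) := by
            refine Finset.sum_le_sum fun v _ => ?_
            exact le_trans Finset.card_image_le (ih (m - N) (by omega) _)
        _ = (VF c N).card * ((3 ^ N - 2 ^ N) ^ ((m - N) / N) * 3 ^ ((m - N) % N)) := by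
            rw [Finset.sum_const, smul_eq_mul]
        _ ≤ (3 ^ N - 2 ^ N) * ((3 ^ N - 2 ^ N) ^ ((m - N) / N) * 3 ^ ((m - N) % N)) := by
            exact Nat.mul_le_mul_right _ (cardVF c N)
        _ = (3 ^ N - 2 ^ N) ^ ((m - N) / N + 1) * 3 ^ ((m - N) % N) := by ring
        _ = _ := hb

def WF (N m : ℕ) : Finset (List LL) := (RF m).filter (winP N)

lemma wfBound (N : ℕ) (hN : 1 ≤ N) (m : ℕ) :
    (WF N (m + 1)).card ≤ 4 * ((3 ^ N - 2 ^ N) ^ (m / N) * 3 ^ (m % N)) := by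
  have hsub : WF N (m + 1) ⊆ (Finset.univ : Finset LL).biUnion
      (fun h => (CF h N m).image (h :: ·)) := by
    intro l hl
    rw [WF, Finset.mem_filter, mem_RF] at hl
    obtain ⟨⟨hlen, hred⟩, hwin⟩ := hl
    cases l with
    | nil => simp at hlen
    | cons x t =>
      have hch := List.isChain_cons.mp hred
      refine Finset.mem_biUnion.mpr ⟨x, Finset.mem_univ _, Finset.mem_image.mpr ⟨t, ?_, rfl⟩⟩
      refine Finset.mem_filter.mpr ⟨mem_RF.mpr ⟨by simpa using hlen, hch.2⟩, ?_, hch.1⟩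
      intro p hp
      have h2 : (t.drop p).take N = ((x :: t).drop (p + 1)).take N := by
        rw [List.drop_succ_cons]
      rw [h2]
      exact hwin (p + 1) (by simp at hp ⊢; omega)
  calc (WF N (m + 1)).card ≤ _ := Finset.card_le_card hsub
    _ ≤ ∑ h ∈ (Finset.univ : Finset LL), ((CF h N m).image (h :: ·)).card :=
        Finset.card_biUnion_le
    _ ≤ ∑ _h ∈ (Finset.univ : Finset LL), (3 ^ N - 2 ^ N) ^ (m / N) * 3 ^ (m % N) := by
        refine Finset.sum_le_sum fun h _ => ?_
        exact le_trans Finset.card_image_le (cfBound N hN m h)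
    _ = 4 * ((3 ^ N - 2 ^ N) ^ (m / N) * 3 ^ (m % N)) := by simp [Finset.card_univ]

def c2 (u : List LL) : LL := if u.getLast? = some (false, true) then (false, true) else (false, false)

lemma c2_cases (u : List LL) : c2 u = (false, true) ∨ c2 u = (false, false) := by
  unfold c2; split <;> simp

lemma c2_ok (u : List LL) : Ok (c2 u) aL := by
  rcases c2_cases u with h | h <;> rw [h] <;> decide

lemma c2_junction (u : List LL) : ∀ x ∈ (aL :: u).getLast?, Ok x (c2 u) := by
  intro x hx
  cases hu : u.getLast? with
  | none =>
    have hnil : u = [] := List.getLast?_eq_none_iff.mp hu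
    subst hnil
    simp only [List.getLast?_singleton, Option.mem_some_iff] at hx
    subst hx
    have hc : c2 [] = (false, false) := by unfold c2; simp
    rw [hc]; decide
  | some w =>
    have hune : u ≠ [] := by intro h; subst h; simp at hu
    have hlast : (aL :: u).getLast? = some w := by
      have h9 : (aL :: u) = [aL] ++ u := rfl
      rw [h9, List.getLast?_append, hu]; rfl
    rw [hlast, Option.mem_some_iff] at hx
    subst hx
    by_cases hw : w = (false, true)
    · subst hw
      have hc : c2 u = (false, true) := by unfold c2; rw [hu, if_pos rfl]
      rw [hc]; decide
    · have hc : c2 u = (false, false) := by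
        unfold c2
        rw [hu, if_neg (by simpa using hw)]
      rw [hc]
      intro hcon
      apply hw
      have h2 := congrArg binv hcon
      rw [binv_binv] at h2
      rw [← h2]; rfl

def SFt (N : ℕ) : Finset (List LL) :=
  (RF N).filter (fun l => l.head? = some aL ∧ l.getLast? = some aL)

def sfWord (bits : List (Fin 3)) : List LL :=
  aL :: (wordOf aL bits ++ [c2 (wordOf aL bits), aL])

lemma sfWord_red (bits : List (Fin 3)) : RedW (sfWord bits) := by
  set u := wordOf aL bits with hu
  show List.IsChain Ok (aL :: (u ++ [c2 u, aL]))
  have h1 : (aL :: (u ++ [c2 u, aL])) = (aL :: u) ++ [c2 u, aL] := by simp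
  rw [h1, List.isChain_append]
  refine ⟨chain'_of_chain (wordOf_chain bits aL), ?_, ?_⟩
  · exact List.isChain_cons_cons.mpr ⟨c2_ok u, List.isChain_singleton _⟩
  · intro x hx y hy
    simp only [List.head?_cons, Option.mem_some_iff] at hy
    subst hy
    exact c2_junction u x hx

lemma cardSF_lower (k : ℕ) : 3 ^ k ≤ (SFt (k + 3)).card := by
  have h := Finset.card_le_card_of_injOn
    (f := fun bits : Fin k → Fin 3 => sfWord (List.ofFn bits))
    (s := (Finset.univ : Finset (Fin k → Fin 3))) (t := SFt (k + 3))
    (by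
      intro bits _
      refine Finset.mem_filter.mpr ⟨mem_RF.mpr ⟨?_, sfWord_red _⟩, rfl, ?_⟩
      · show (aL :: (wordOf aL (List.ofFn bits) ++ [c2 (wordOf aL (List.ofFn bits)), aL])).length = k + 3
        simp only [List.length_cons, List.length_append, wordOf_length, List.length_ofFn,
          List.length_nil]
      · show (aL :: (wordOf aL (List.ofFn bits) ++ [c2 _, aL])).getLast? = some aL
        have : (aL :: (wordOf aL (List.ofFn bits) ++ [c2 (wordOf aL (List.ofFn bits)), aL]))
            = (aL :: (wordOf aL (List.ofFn bits) ++ [c2 (wordOf aL (List.ofFn bits))])) ++ [aL] := by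
          rw [List.cons_append, List.append_assoc]; rfl
        rw [this, List.getLast?_concat])
    (by
      intro b1 _ b2 _ h
      simp only [sfWord] at h
      have h2 : wordOf aL (List.ofFn b1) = wordOf aL (List.ofFn b2) := by
        have := congrArg (fun w => (w.drop 1).dropLast.dropLast) h
        have hre : ∀ (u : List LL) (c : LL), u ++ [c, aL] = (u ++ [c]) ++ [aL] := by
          intros u c; rw [List.append_assoc]; rfl
        simp only [List.drop_succ_cons, List.drop_zero, hre, List.dropLast_concat] at this
        exact this
      exact List.ofFn_injective (wordOf_inj _ _ _ h2))
  simpa using h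

def BallR (n : ℕ) : Finset (List LL) := (Finset.range (n + 1)).biUnion RF

def BallW (N n : ℕ) : Finset (List LL) := (Finset.range (n + 1)).biUnion (WF N)

lemma mem_BallR {n : ℕ} {l : List LL} : l ∈ BallR n ↔ l.length ≤ n ∧ RedW l := by
  simp only [BallR, Finset.mem_biUnion, Finset.mem_range, mem_RF]
  constructor
  · rintro ⟨m, hm, rfl, hr⟩; exact ⟨by omega, hr⟩
  · rintro ⟨h1, h2⟩; exact ⟨l.length, by omega, rfl, h2⟩

lemma mem_BallW {N n : ℕ} {l : List LL} : l ∈ BallW N n ↔ l.length ≤ n ∧ RedW l ∧ winP N l := by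
  simp only [BallW, Finset.mem_biUnion, Finset.mem_range, WF, Finset.mem_filter, mem_RF]
  constructor
  · rintro ⟨m, hm, ⟨rfl, hr⟩, hw⟩; exact ⟨by omega, hr, hw⟩
  · rintro ⟨h1, h2, h3⟩; exact ⟨l.length, by omega, ⟨rfl, h2⟩, h3⟩

lemma cardBallR_le (n : ℕ) : (BallR n).card ≤ 2 * 3 ^ n := by
  have hsum : ∀ n : ℕ, (∑ m ∈ Finset.range (n + 1), (RF m).card) ≤ 2 * 3 ^ n := by
    intro n
    induction n with
    | zero => simp [cardRF0]
    | succ n ih =>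
      rw [Finset.sum_range_succ]
      have := cardRFsucc n
      have h3 : (3:ℕ) ^ (n+1) = 3 * 3 ^ n := by ring
      omega
  exact le_trans Finset.card_biUnion_le (hsum n)

lemma cardBallR_pos (n : ℕ) : 1 ≤ (BallR n).card := by
  refine Finset.card_pos.mpr ⟨[], ?_⟩
  exact mem_BallR.mpr ⟨by simp, List.isChain_nil⟩

lemma cardBallR_ge (n : ℕ) : 3 ^ n ≤ (BallR (n + 1)).card := by
  refine le_trans (cardRF_lower n) (Finset.card_le_card ?_)
  intro l hl
  rw [mem_RF] at hl
  exact mem_BallR.mpr ⟨by omega, hl.2⟩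

lemma two_add_two_pow_le (N : ℕ) (hN : 2 ≤ N) : 2 ^ N + 2 ≤ 3 ^ N := by
  induction N with
  | zero => omega
  | succ n ih =>
    rcases Nat.lt_or_ge n 2 with h | h
    · interval_cases n
      · omega
      · norm_num
    · have := ih (by omega)
      have h2 : (2:ℕ) ^ (n+1) = 2 * 2 ^ n := by ring
      have h3 : (3:ℕ) ^ (n+1) = 3 * 3 ^ n := by ring
      omega

lemma sum_div_pow_le (E N n : ℕ) (hE : 2 ≤ E) (hN : 1 ≤ N) :
    (∑ m ∈ Finset.range n, E ^ (m / N)) ≤ 2 * N * E ^ (n / N) := by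
  have key : ∀ K, (∑ m ∈ Finset.range (N * K), E ^ (m / N)) = ∑ q ∈ Finset.range K, N * E ^ q := by
    intro K
    induction K with
    | zero => simp
    | succ k ih =>
      have h1 : N * (k + 1) = N * k + N := by ring
      rw [h1, Finset.sum_range_add, ih, Finset.sum_range_succ]
      congr 1
      have hterm : ∀ i ∈ Finset.range N, E ^ ((N * k + i) / N) = E ^ k := by
        intro i hi
        rw [Finset.mem_range] at hi
        congr 1
        rw [Nat.mul_add_div (by omega), Nat.div_eq_of_lt hi]
        omega
      rw [Finset.sum_congr rfl hterm, Finset.sum_const, smul_eq_mul, Finset.card_range]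
  have geom : ∀ Q, (∑ q ∈ Finset.range (Q + 1), E ^ q) ≤ 2 * E ^ Q := by
    intro Q
    induction Q with
    | zero => simpa using hE
    | succ q ih =>
      rw [Finset.sum_range_succ]
      have h2 : 2 * E ^ q ≤ E ^ (q + 1) := by
        rw [pow_succ]
        calc 2 * E ^ q = E ^ q * 2 := by ring
        _ ≤ E ^ q * E := by exact Nat.mul_le_mul_left _ hE
      omega
  calc (∑ m ∈ Finset.range n, E ^ (m / N))
      ≤ ∑ m ∈ Finset.range (N * (n / N + 1)), E ^ (m / N) := by
        refine Finset.sum_le_sum_of_subset ?_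
        refine Finset.range_subset_range.mpr ?_
        have h1 : N * (n / N + 1) = N * (n / N) + N := by ring
        have h2 := Nat.mod_lt n (show 0 < N by omega)
        have h3 := Nat.div_add_mod n N
        omega
    _ = ∑ q ∈ Finset.range (n / N + 1), N * E ^ q := key _
    _ = N * ∑ q ∈ Finset.range (n / N + 1), E ^ q := by rw [Finset.mul_sum]
    _ ≤ N * (2 * E ^ (n / N)) := Nat.mul_le_mul_left _ (geom _)
    _ = 2 * N * E ^ (n / N) := by ring

lemma cardBallW_le (N n : ℕ) (hN : 2 ≤ N) :
    (BallW N n).card ≤ 1 + 8 * N * 3 ^ N * (3 ^ N - 2 ^ N) ^ (n / N) := by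
  have hE : 2 ≤ 3 ^ N - 2 ^ N := by
    have := two_add_two_pow_le N hN
    omega
  have h0 : (WF N 0).card ≤ 1 := by
    have : WF N 0 ⊆ RF 0 := Finset.filter_subset _ _
    calc (WF N 0).card ≤ (RF 0).card := Finset.card_le_card this
    _ = 1 := cardRF0
  calc (BallW N n).card ≤ ∑ m ∈ Finset.range (n + 1), (WF N m).card := Finset.card_biUnion_le
    _ = (∑ m ∈ Finset.range n, (WF N (m + 1)).card) + (WF N 0).card := Finset.sum_range_succ' _ n
    _ ≤ (∑ m ∈ Finset.range n, 4 * ((3 ^ N - 2 ^ N) ^ (m / N) * 3 ^ (m % N))) + 1 :=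
        add_le_add (Finset.sum_le_sum fun m _ => wfBound N (by omega) m) h0
    _ ≤ (∑ m ∈ Finset.range n, 4 * 3 ^ N * (3 ^ N - 2 ^ N) ^ (m / N)) + 1 := by
        refine add_le_add_left (Finset.sum_le_sum fun m _ => ?_) 1
        have h1 : (3:ℕ) ^ (m % N) ≤ 3 ^ N := by
          apply Nat.pow_le_pow_right (by omega)
          exact le_of_lt (Nat.mod_lt _ (by omega))
        calc 4 * ((3 ^ N - 2 ^ N) ^ (m / N) * 3 ^ (m % N))
            ≤ 4 * ((3 ^ N - 2 ^ N) ^ (m / N) * 3 ^ N) := by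
              exact Nat.mul_le_mul_left _ (Nat.mul_le_mul_left _ h1)
        _ = 4 * 3 ^ N * (3 ^ N - 2 ^ N) ^ (m / N) := by ring
    _ = 4 * 3 ^ N * (∑ m ∈ Finset.range n, (3 ^ N - 2 ^ N) ^ (m / N)) + 1 := by
        rw [Finset.mul_sum]
    _ ≤ 4 * 3 ^ N * (2 * N * (3 ^ N - 2 ^ N) ^ (n / N)) + 1 :=
        by gcongr; exact sum_div_pow_le _ N n hE (by omega)
    _ = 1 + 8 * N * 3 ^ N * (3 ^ N - 2 ^ N) ^ (n / N) := by ring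

open Filter

noncomputable section

def BndNum (N n : ℕ) : ℕ := 1 + 8 * N * 3 ^ N * (3 ^ N - 2 ^ N) ^ (n / N)

lemma limKey (N : ℕ) (hN : 2 ≤ N) :
    Tendsto (fun K : ℕ => (BndNum N (K * N) : ℝ) / 3 ^ (K * N - 1)) atTop (nhds 0) := by
  have hElt : (3:ℕ) ^ N - 2 ^ N < 3 ^ N := by
    have h2 : 0 < (2:ℕ) ^ N := Nat.pow_pos (by omega)
    have h3 : (2:ℕ) ^ N < 3 ^ N := Nat.pow_lt_pow_left (by omega) (by omega)
    omega
  set C : ℝ := 8 * N * 3 ^ N with hC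
  have hC0 : 0 ≤ C := by positivity
  set E : ℝ := ((3 ^ N - 2 ^ N : ℕ) : ℝ) with hEdef
  have hE0 : 0 ≤ E := Nat.cast_nonneg _
  have hxlt : E / 3 ^ N < 1 := by
    rw [div_lt_one (by positivity)]
    calc E < ((3 ^ N : ℕ) : ℝ) := Nat.cast_lt.mpr hElt
    _ = 3 ^ N := by push_cast; ring
  have hx0 : 0 ≤ E / 3 ^ N := by positivity
  have hfval : ∀ K : ℕ, (BndNum N (K * N) : ℝ) = 1 + C * E ^ K := by
    intro K
    have hdiv : (K * N) / N = K := Nat.mul_div_cancel K (by omega)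
    rw [BndNum, hdiv, hC, hEdef]
    push_cast
    ring
  have hDbound : ∀ K : ℕ, (3:ℝ) ^ (N * K) ≤ 3 * 3 ^ (K * N - 1) := by
    intro K
    have h1 : (3:ℝ) * 3 ^ (K * N - 1) = 3 ^ (K * N - 1 + 1) := by rw [pow_succ]; ring
    rw [h1]
    apply pow_le_pow_right₀ (by norm_num)
    have h7 := Nat.le_mul_of_pos_left K (show 0 < N by omega)
    have h8 : N * K = K * N := Nat.mul_comm N K
    omega
  have hle : ∀ K : ℕ, (BndNum N (K * N) : ℝ) / 3 ^ (K * N - 1)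
      ≤ 3 * (1/3 : ℝ) ^ K + (3 * C) * (E / 3 ^ N) ^ K := by
    intro K
    have hD : (0:ℝ) < 3 ^ (K * N - 1) := by positivity
    rw [hfval, add_div]
    have t1 : (1:ℝ) / 3 ^ (K * N - 1) ≤ 3 * (1/3) ^ K := by
      rw [one_div_pow, mul_one_div, div_le_div_iff₀ hD (by positivity), one_mul]
      have h9 : (3:ℝ) ^ K * 3 ^ (K * N - 1) * 3⁻¹ * 3 = 3 ^ K * 3 ^ (K * N - 1) := by
        ring
      have h1 : (3:ℝ) * 3 ^ (K * N - 1) = 3 ^ (K * N - 1 + 1) := by rw [pow_succ]; ring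
      rw [h1]
      apply pow_le_pow_right₀ (by norm_num)
      have h7 := Nat.le_mul_of_pos_right K (show 0 < N by omega)
      omega
    have t2 : C * E ^ K / 3 ^ (K * N - 1) ≤ (3 * C) * (E / 3 ^ N) ^ K := by
      have h6 : ((3:ℝ) ^ N) ^ K = 3 ^ (N * K) := by rw [← pow_mul]
      rw [div_pow, h6, ← mul_div_assoc, div_le_div_iff₀ hD (by positivity)]
      have h5 : (0:ℝ) ≤ C * E ^ K := by positivity
      calc C * E ^ K * 3 ^ (N * K) ≤ C * E ^ K * (3 * 3 ^ (K * N - 1)) :=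
            mul_le_mul_of_nonneg_left (hDbound K) h5
      _ = 3 * C * E ^ K * 3 ^ (K * N - 1) := by ring
    exact add_le_add t1 t2
  have hge : ∀ K : ℕ, (0:ℝ) ≤ (BndNum N (K * N) : ℝ) / 3 ^ (K * N - 1) := by
    intro K; positivity
  have hg : Tendsto (fun K : ℕ => 3 * (1/3 : ℝ) ^ K + (3 * C) * (E / 3 ^ N) ^ K)
      atTop (nhds 0) := by
    have l1 := (tendsto_pow_atTop_nhds_zero_of_lt_one (by norm_num : (0:ℝ) ≤ 1/3)
      (by norm_num : (1/3:ℝ) < 1)).const_mul 3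
    have l2 := (tendsto_pow_atTop_nhds_zero_of_lt_one hx0 hxlt).const_mul (3 * C)
    have := l1.add l2
    simpa using this
  exact squeeze_zero hge hle hg

lemma key (N M : ℕ) :
    ∃ n : ℕ, M ≤ n ∧ (2 ≤ N → (BndNum N n : ℝ) / 3 ^ (n - 1) ≤ 1 / (M + 1)) := by
  by_cases hN : 2 ≤ N
  · have hlim := limKey N hN
    have hev : ∀ᶠ K in atTop, (BndNum N (K * N) : ℝ) / 3 ^ (K * N - 1) < 1 / (M + 1) := by
      apply hlim.eventually (gt_mem_nhds _)
      positivity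
    obtain ⟨K₀, hK₀⟩ := eventually_atTop.mp hev
    refine ⟨(max K₀ (M + 1)) * N, ?_, fun _ => ?_⟩
    · have h1 : M + 1 ≤ max K₀ (M + 1) := le_max_right _ _
      have h2 := Nat.le_mul_of_pos_right (max K₀ (M + 1)) (show 0 < N by omega)
      omega
    · exact le_of_lt (hK₀ _ (le_max_left _ _))
  · exact ⟨M, le_refl _, fun h => absurd h hN⟩

def nseq : ℕ → ℕ
  | 0 => 4
  | j + 1 => (key (nseq j) (max (nseq j) (j + 1))).choose + 1

lemma nseq_def (j : ℕ) : nseq (j + 1) = (key (nseq j) (max (nseq j) (j + 1))).choose + 1 := by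
  simp [nseq]

lemma nseq_succ_ge (j : ℕ) : max (nseq j) (j + 1) ≤ nseq (j + 1) - 1 := by
  have h := (key (nseq j) (max (nseq j) (j + 1))).choose_spec.1
  rw [nseq_def]
  omega

lemma nseq_ge4 : ∀ j, 4 ≤ nseq j := by
  intro j
  induction j with
  | zero => exact le_refl _
  | succ j ih =>
    have h1 := nseq_succ_ge j
    have h3 : nseq j ≤ max (nseq j) (j + 1) := le_max_left _ _
    have h2 := nseq_def j
    omega

lemma nseq_strictMono : StrictMono nseq := by
  apply strictMono_nat_of_lt_succ
  intro j
  have h1 := nseq_succ_ge j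
  have h3 : nseq j ≤ max (nseq j) (j + 1) := le_max_left _ _
  have h4 := nseq_ge4 (j + 1)
  omega

lemma nseq_bound (j : ℕ) :
    (BndNum (nseq j) (nseq (j + 1) - 1) : ℝ) / 3 ^ (nseq (j + 1) - 1 - 1) ≤ 1 / (j + 2) := by
  have hspec := (key (nseq j) (max (nseq j) (j + 1))).choose_spec
  have h2 : 2 ≤ nseq j := by have := nseq_ge4 j; omega
  have heq : nseq (j + 1) - 1 = (key (nseq j) (max (nseq j) (j + 1))).choose := by
    rw [nseq_def]; omega
  rw [heq]
  refine le_trans (hspec.2 h2) ?_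
  apply one_div_le_one_div_of_le (by positivity)
  have h1 : (j:ℝ) + 1 ≤ max (nseq j) (j + 1) := by
    have := le_max_right (nseq j) (j + 1)
    exact_mod_cast by exact_mod_cast Nat.cast_le.mpr this
  linarith

def GenS : Set (FreeGroup Bool) := {g | ∃ j, g.toWord ∈ SFt (nseq j)}

def Lam : Subsemigroup (FreeGroup Bool) := Subsemigroup.closure GenS

lemma mem_SFt {m : ℕ} {l : List LL} :
    l ∈ SFt m ↔ (l.length = m ∧ RedW l) ∧ l.head? = some aL ∧ l.getLast? = some aL := by
  rw [SFt, Finset.mem_filter, mem_RF]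

lemma flatten_head {bl : List (List LL)} (hne : bl ≠ [])
    (h : ∀ v ∈ bl, v.head? = some aL) : bl.flatten.head? = some aL := by
  cases bl with
  | nil => exact absurd rfl hne
  | cons v rest =>
    rw [List.flatten_cons, List.head?_append, h v (List.mem_cons_self)]
    rfl

lemma flatten_last {bl : List (List LL)} (hne : bl ≠ [])
    (h : ∀ v ∈ bl, v.getLast? = some aL) : bl.flatten.getLast? = some aL := by
  induction bl with
  | nil => exact absurd rfl hne
  | cons v rest ih =>
    rw [List.flatten_cons, List.getLast?_append]
    cases hrest : rest with
    | nil =>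
      subst hrest
      simp [h v (List.mem_cons_self)]
    | cons w rest' =>
      rw [← hrest, ih (by rw [hrest]; simp) (fun u hu => h u (List.mem_cons_of_mem _ hu))]
      rfl

lemma lam_struct {g : FreeGroup Bool} (hg : g ∈ Lam) :
    ∃ bl : List (List LL), bl ≠ [] ∧
      (∀ v ∈ bl, (∃ j, v.length = nseq j) ∧ v.head? = some aL ∧ v.getLast? = some aL) ∧
      g.toWord = bl.flatten := by
  induction hg using Subsemigroup.closure_induction with
  | mem x hx =>
    obtain ⟨j, hj⟩ := hx
    rw [mem_SFt] at hj
    exact ⟨[x.toWord], by simp, by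
      intro v hv
      rw [List.mem_singleton] at hv
      subst hv
      exact ⟨⟨j, hj.1.1⟩, hj.2.1, hj.2.2⟩, by simp⟩
  | mul x y hx hy ihx ihy =>
    obtain ⟨blx, hbx, hvx, hwx⟩ := ihx
    obtain ⟨bly, hby, hvy, hwy⟩ := ihy
    have hlastx : x.toWord.getLast? = some aL := by
      rw [hwx]; exact flatten_last hbx (fun v hv => (hvx v hv).2.2)
    have hheady : y.toWord.head? = some aL := by
      rw [hwy]; exact flatten_head hby (fun v hv => (hvy v hv).2.1)
    have hred : RedW (x.toWord ++ y.toWord) := by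
      rw [RedW, List.isChain_append]
      refine ⟨redW_toWord x, redW_toWord y, ?_⟩
      intro a ha b hb
      rw [hlastx, Option.mem_some_iff] at ha
      rw [hheady, Option.mem_some_iff] at hb
      subst ha; subst hb
      decide
    refine ⟨blx ++ bly, by simp [hbx], ?_, ?_⟩
    · intro v hv
      rcases List.mem_append.mp hv with h | h
      · exact hvx v h
      · exact hvy v h
    · rw [toWord_mul_eq hred, hwx, hwy, List.flatten_append]

lemma flatten_winP (N : ℕ) (hN : 1 ≤ N) :
    ∀ (bl : List (List LL)), (∀ v ∈ bl, v.getLast? = some aL) →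
      (∀ v ∈ bl, v.length ≤ N) → winP N bl.flatten := by
  intro bl
  induction bl with
  | nil =>
    intro _ _ p hp
    simp at hp
    omega
  | cons v rest ih =>
    intro hlast hlen p hp
    rw [List.flatten_cons] at hp ⊢
    by_cases hpv : p < v.length
    · have hvne : v ≠ [] := by
        intro h; subst h; simp at hpv
      have hgl : v.getLast? = some aL := hlast v (List.mem_cons_self)
      have hidx : v[v.length - 1]? = some aL := by
        rw [← List.getLast?_eq_getElem?]; exact hgl
      have hvN : v.length ≤ N := hlen v (List.mem_cons_self)
      have h1 : (((v ++ rest.flatten).drop p).take N)[v.length - 1 - p]? = some aL := by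
        rw [List.getElem?_take_of_lt (by omega), List.getElem?_drop]
        have he : p + (v.length - 1 - p) = v.length - 1 := by omega
        rw [he, List.getElem?_append_left (by omega)]
        exact hidx
      exact List.mem_of_getElem? h1
    · push_neg at hpv
      have h2 : (v ++ rest.flatten).drop p = rest.flatten.drop (p - v.length) := by
        have h3 : p = v.length + (p - v.length) := by omega
        rw [h3, ← List.drop_drop, List.drop_left]
        congr 1
        omega
      rw [h2]
      apply ih (fun u hu => hlast u (List.mem_cons_of_mem _ hu))
        (fun u hu => hlen u (List.mem_cons_of_mem _ hu))
      rw [List.length_append] at hp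
      omega

lemma lam_toWord_winP {g : FreeGroup Bool} (hg : g ∈ Lam) {j : ℕ} (hj : 1 ≤ j)
    (hn : g.toWord.length < nseq j) : winP (nseq (j - 1)) g.toWord := by
  obtain ⟨bl, hbne, hv, hflat⟩ := lam_struct hg
  rw [hflat]
  apply flatten_winP _ (by have := nseq_ge4 (j-1); omega)
  · exact fun v hvm => (hv v hvm).2.2
  · intro v hvm
    obtain ⟨⟨i, hi⟩, _, _⟩ := hv v hvm
    have hle : v.length ≤ bl.flatten.length := by
      rw [List.length_flatten]
      exact List.le_sum_of_mem (List.mem_map_of_mem hvm)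
    rw [← hflat] at hle
    have : nseq i < nseq j := by omega
    have hij : i < j := nseq_strictMono.lt_iff_lt.mp this
    have : nseq i ≤ nseq (j - 1) := nseq_strictMono.monotone (by omega)
    omega

end

noncomputable section
open Filter

def ballEquiv (n : ℕ) : {g : FreeGroup Bool // wordLength stdGens g ≤ n} ≃ {l // l ∈ BallR n} where
  toFun g := ⟨g.1.toWord, mem_BallR.mpr ⟨by
    have h := g.2
    rw [wordLength_eq] at h
    exact h, redW_toWord _⟩⟩
  invFun l := ⟨FreeGroup.mk l.1, by
    rw [wordLength_eq]
    have h := mem_BallR.mp l.2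
    show (FreeGroup.mk l.1).toWord.length ≤ n
    rw [toWord_mk_red h.2]
    exact h.1⟩
  left_inv g := Subtype.ext FreeGroup.mk_toWord
  right_inv l := Subtype.ext (toWord_mk_red (mem_BallR.mp l.2).2)

lemma card_ball_eq (n : ℕ) :
    Nat.card {g : FreeGroup Bool // wordLength stdGens g ≤ n} = (BallR n).card := by
  rw [Nat.card_congr (ballEquiv n), Nat.card_eq_finsetCard]

instance finite_ball (n : ℕ) : Finite {g : FreeGroup Bool // wordLength stdGens g ≤ n} :=
  Finite.of_equiv _ (ballEquiv n).symm

instance finite_num (n : ℕ) :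
    Finite {g : FreeGroup Bool // wordLength stdGens g ≤ n ∧ g ∈ Lam} := by
  apply Finite.of_injective
    (fun x : {g : FreeGroup Bool // wordLength stdGens g ≤ n ∧ g ∈ Lam} =>
      (⟨x.1, x.2.1⟩ : {g : FreeGroup Bool // wordLength stdGens g ≤ n}))
  intro a b hab
  exact Subtype.ext (congrArg
    (fun y : {g : FreeGroup Bool // wordLength stdGens g ≤ n} => (y : FreeGroup Bool)) hab)

lemma numer_le_denom (n : ℕ) :
    Nat.card {g : FreeGroup Bool // wordLength stdGens g ≤ n ∧ g ∈ Lam}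
      ≤ Nat.card {g : FreeGroup Bool // wordLength stdGens g ≤ n} := by
  apply Nat.card_le_card_of_injective
    (fun x : {g : FreeGroup Bool // wordLength stdGens g ≤ n ∧ g ∈ Lam} =>
      (⟨x.1, x.2.1⟩ : {g : FreeGroup Bool // wordLength stdGens g ≤ n}))
  intro a b hab
  exact Subtype.ext (congrArg
    (fun y : {g : FreeGroup Bool // wordLength stdGens g ≤ n} => (y : FreeGroup Bool)) hab)

lemma numer_le (j n : ℕ) (hj : 1 ≤ j) (hn : n < nseq j) :
    Nat.card {g : FreeGroup Bool // wordLength stdGens g ≤ n ∧ g ∈ Lam}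
      ≤ (BallW (nseq (j - 1)) n).card := by
  rw [← Nat.card_eq_finsetCard]
  apply Nat.card_le_card_of_injective
    (fun x : {g : FreeGroup Bool // wordLength stdGens g ≤ n ∧ g ∈ Lam} =>
      (⟨x.1.toWord, by
        have h := x.2.1
        rw [wordLength_eq] at h
        have hnorm : FreeGroup.norm x.1 = x.1.toWord.length := rfl
        exact mem_BallW.mpr ⟨by omega, redW_toWord _, lam_toWord_winP x.2.2 hj (by omega)⟩⟩ :
        {l // l ∈ BallW (nseq (j - 1)) n}))
  intro a b hab
  exact Subtype.ext (FreeGroup.toWord_injective (Subtype.ext_iff.mp hab))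

lemma numer_ge (j : ℕ) :
    (SFt (nseq j)).card
      ≤ Nat.card {g : FreeGroup Bool // wordLength stdGens g ≤ nseq j ∧ g ∈ Lam} := by
  rw [← Nat.card_eq_finsetCard (SFt (nseq j))]
  apply Nat.card_le_card_of_injective
    (fun l : {l // l ∈ SFt (nseq j)} =>
      (⟨FreeGroup.mk l.1, by
        have hm := l.2
        rw [mem_SFt] at hm
        constructor
        · rw [wordLength_eq]
          show (FreeGroup.mk l.1).toWord.length ≤ nseq j
          rw [toWord_mk_red hm.1.2]
          omega
        · apply Subsemigroup.subset_closure
          exact ⟨j, by rw [toWord_mk_red hm.1.2]; exact l.2⟩⟩ :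
        {g : FreeGroup Bool // wordLength stdGens g ≤ nseq j ∧ g ∈ Lam}))
  intro a b hab
  have h1 : FreeGroup.mk a.1 = FreeGroup.mk b.1 := Subtype.ext_iff.mp hab
  have h2 := congrArg FreeGroup.toWord h1
  rw [toWord_mk_red (mem_SFt.mp a.2).1.2, toWord_mk_red (mem_SFt.mp b.2).1.2] at h2
  exact Subtype.ext h2

def Frat (n : ℕ) : ℝ :=
  (Nat.card {g : FreeGroup Bool // wordLength stdGens g ≤ n ∧ g ∈ Lam} : ℝ) /
    (Nat.card {g : FreeGroup Bool // wordLength stdGens g ≤ n} : ℝ)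

lemma denom_pos (n : ℕ) :
    (0:ℝ) < (Nat.card {g : FreeGroup Bool // wordLength stdGens g ≤ n} : ℝ) := by
  rw [card_ball_eq]
  exact_mod_cast cardBallR_pos n

lemma Frat_nonneg (n : ℕ) : 0 ≤ Frat n := by
  apply div_nonneg (Nat.cast_nonneg _) (Nat.cast_nonneg _)

lemma Frat_le_one (n : ℕ) : Frat n ≤ 1 := by
  rw [Frat, div_le_one (denom_pos n)]
  exact_mod_cast numer_le_denom n

lemma Frat_limsup_lower (j : ℕ) : (1:ℝ)/54 ≤ Frat (nseq j) := by
  have h4 := nseq_ge4 j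
  set k := nseq j - 3 with hk
  have hk3 : k + 3 = nseq j := by omega
  have hnum : (3:ℝ) ^ k ≤
      (Nat.card {g : FreeGroup Bool // wordLength stdGens g ≤ nseq j ∧ g ∈ Lam} : ℝ) := by
    have h1 := cardSF_lower k
    rw [hk3] at h1
    have h2 := numer_ge j
    exact_mod_cast le_trans h1 h2
  have hden : (Nat.card {g : FreeGroup Bool // wordLength stdGens g ≤ nseq j} : ℝ)
      ≤ 2 * 3 ^ (k + 3) := by
    rw [card_ball_eq, hk3]
    exact_mod_cast cardBallR_le (nseq j)
  rw [Frat]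
  have hstep : (3:ℝ) ^ k / (2 * 3 ^ (k + 3)) ≤ _ :=
    div_le_div₀ (Nat.cast_nonneg _) hnum (denom_pos (nseq j)) hden
  refine le_trans (le_of_eq ?_) hstep
  have h3 : (3:ℝ) ^ (k + 3) = 3 ^ k * 27 := by rw [pow_add]; norm_num
  rw [h3]
  have hp : (0:ℝ) < 3 ^ k := by positivity
  field_simp
  ring

lemma Frat_liminf_upper (j : ℕ) :
    Frat (nseq (j + 1) - 1) ≤ 1 / (j + 2) := by
  set n := nseq (j + 1) - 1 with hn
  have h4 := nseq_ge4 (j + 1)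
  have h4' := nseq_ge4 j
  have hnlt : n < nseq (j + 1) := by omega
  have hn1 : 1 ≤ n := by
    have h1 := nseq_succ_ge j
    have h3 : nseq j ≤ max (nseq j) (j + 1) := le_max_left _ _
    omega
  have hnum : (Nat.card {g : FreeGroup Bool // wordLength stdGens g ≤ n ∧ g ∈ Lam} : ℝ)
      ≤ (BndNum (nseq j) n : ℝ) := by
    have h1 := numer_le (j + 1) n (by omega) hnlt
    simp only [Nat.add_sub_cancel] at h1
    have h2 := cardBallW_le (nseq j) n (by omega)
    rw [BndNum]
    exact_mod_cast le_trans h1 h2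
  have hden : (3:ℝ) ^ (n - 1) ≤
      (Nat.card {g : FreeGroup Bool // wordLength stdGens g ≤ n} : ℝ) := by
    rw [card_ball_eq]
    have h1 := cardBallR_ge (n - 1)
    have h2 : n - 1 + 1 = n := by omega
    rw [h2] at h1
    exact_mod_cast h1
  have hstep : Frat n ≤ (BndNum (nseq j) n : ℝ) / 3 ^ (n - 1) := by
    rw [Frat]
    exact div_le_div₀ (Nat.cast_nonneg _) hnum (by positivity) hden
  exact le_trans hstep (nseq_bound j)

end

/-- In the free group `F₂` with its word metric, there is a subsemigroup `Λ⁺` with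
`liminf |B_n ∩ Λ⁺| / |B_n| = 0` and `limsup |B_n ∩ Λ⁺| / |B_n| > 0`. -/
theorem stmt_17 :
    ∃ Λ : Subsemigroup (FreeGroup Bool),
      liminf (fun n : ℕ =>
        (Nat.card {g : FreeGroup Bool // wordLength stdGens g ≤ n ∧ g ∈ Λ} : ℝ) /
          (Nat.card {g : FreeGroup Bool // wordLength stdGens g ≤ n} : ℝ)) atTop = 0 ∧
      0 < limsup (fun n : ℕ =>
        (Nat.card {g : FreeGroup Bool // wordLength stdGens g ≤ n ∧ g ∈ Λ} : ℝ) /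
          (Nat.card {g : FreeGroup Bool // wordLength stdGens g ≤ n} : ℝ)) atTop := by
  refine ⟨Lam, ?_, ?_⟩
  · -- liminf = 0
    have hFun : (fun n : ℕ =>
        (Nat.card {g : FreeGroup Bool // wordLength stdGens g ≤ n ∧ g ∈ Lam} : ℝ) /
          (Nat.card {g : FreeGroup Bool // wordLength stdGens g ≤ n} : ℝ)) = Frat := rfl
    rw [hFun]
    have hbddBelow : IsBoundedUnder (· ≥ ·) (atTop : Filter ℕ) Frat :=
      isBoundedUnder_of ⟨0, fun n => Frat_nonneg n⟩
    have hbddAbove : IsBoundedUnder (· ≤ ·) (atTop : Filter ℕ) Frat :=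
      isBoundedUnder_of ⟨1, fun n => Frat_le_one n⟩
    have hge : (0:ℝ) ≤ liminf Frat atTop := by
      apply le_liminf_of_le hbddAbove.isCoboundedUnder_ge
      exact Eventually.of_forall (fun n => Frat_nonneg n)
    have hle : ∀ ε : ℝ, 0 < ε → liminf Frat atTop ≤ ε := by
      intro ε hε
      apply liminf_le_of_frequently_le _ hbddBelow
      rw [frequently_atTop]
      intro a
      obtain ⟨k, hk⟩ := exists_nat_gt (1/ε)
      refine ⟨nseq (max a k + 1) - 1, ?_, ?_⟩
      · have h1 := nseq_strictMono.le_apply (x := max a k + 1)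
        have h2 : a ≤ max a k := le_max_left _ _
        omega
      · refine le_trans (Frat_liminf_upper (max a k)) ?_
        have hk2 : (1:ℝ)/ε < (max a k : ℕ) + 2 := by
          have h3 : (k:ℝ) ≤ ((max a k : ℕ) : ℝ) := by
            exact_mod_cast Nat.cast_le.mpr (le_max_right a k)
          linarith
        rw [div_le_iff₀ (by positivity)]
        rw [div_lt_iff₀ hε] at hk
        have h5 : (1:ℝ) < ε * (k + 1) := by linarith
        have h6 : (k:ℝ) + 1 ≤ ((max a k : ℕ) : ℝ) + 2 := by
          have h3 : (k:ℝ) ≤ ((max a k : ℕ) : ℝ) := by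
            exact_mod_cast Nat.cast_le.mpr (le_max_right a k)
          linarith
        nlinarith [hε.le]
    have : liminf Frat atTop ≤ 0 := by
      by_contra hcon
      push_neg at hcon
      have := hle (liminf Frat atTop / 2) (by linarith)
      linarith
    linarith
  · -- limsup > 0
    have hFun : (fun n : ℕ =>
        (Nat.card {g : FreeGroup Bool // wordLength stdGens g ≤ n ∧ g ∈ Lam} : ℝ) /
          (Nat.card {g : FreeGroup Bool // wordLength stdGens g ≤ n} : ℝ)) = Frat := rfl
    rw [hFun]
    have hbddAbove : IsBoundedUnder (· ≤ ·) (atTop : Filter ℕ) Frat :=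
      isBoundedUnder_of ⟨1, fun n => Frat_le_one n⟩
    have hfreq : ∃ᶠ n in (atTop : Filter ℕ), (1:ℝ)/54 ≤ Frat n := by
      rw [frequently_atTop]
      intro a
      exact ⟨nseq a, nseq_strictMono.le_apply, Frat_limsup_lower a⟩
    calc (0:ℝ) < 1/54 := by norm_num
    _ ≤ limsup Frat atTop := le_limsup_of_frequently_le hfreq hbddAbove
end
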